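/- arXiv:1302.4213 — 10 statements merged into one kernel-verified Lean document; each statement's English description precedes it below -/
import Mathlib

section
/- Let A be an m×n real matrix with nonnegative entries, b ∈ ℝ^m nonnegative, and c ∈ ℝ^n nonnegative. Suppose the LP min{c^T x : Ax ≥ b, x ≥ 0} has an optimal solution x^OPT with optimal value LIN = c^T x^OPT > 0. Let x' be a feasible solution (Ax' ≥ b, x' ≥ 0) with c^T x' = (1+δ)·LIN for some δ > 0, and let α be a real number with 0 < α ≤ δ·LIN. Then there exists a feasible solution x'' (Ax'' ≥ b, x'' ≥ 0) with c^T x'' ≤ (1+δ)·LIN − α and ‖x' − x''‖₁ ≤ α·(1/δ + 1)·(‖x'‖₁ + ‖x^OPT‖₁)/(c^T x'). -/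
open Finset

theorem lp_improve_general
    (m n : ℕ) (hm : 0 < m) (hn : 0 < n)
    (A : Matrix (Fin m) (Fin n) ℝ) (hA : ∀ i j, 0 ≤ A i j)
    (b : Fin m → ℝ) (hb : ∀ i, 0 ≤ b i)
    (c : Fin n → ℝ) (hc : ∀ j, 0 ≤ c j)
    (xOPT : Fin n → ℝ)
    (hxOPTnonneg : ∀ j, 0 ≤ xOPT j)
    (hxOPTfeas : ∀ i, b i ≤ A.mulVec xOPT i)
    (hxOPTopt : ∀ x : Fin n → ℝ, (∀ j, 0 ≤ x j) → (∀ i, b i ≤ A.mulVec x i) →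
      ∑ j, c j * xOPT j ≤ ∑ j, c j * x j)
    (LIN : ℝ) (hLIN : LIN = ∑ j, c j * xOPT j) (hLINpos : 0 < LIN)
    (δ : ℝ) (hδ : 0 < δ)
    (x' : Fin n → ℝ)
    (hx'nonneg : ∀ j, 0 ≤ x' j)
    (hx'feas : ∀ i, b i ≤ A.mulVec x' i)
    (hx'val : ∑ j, c j * x' j = (1 + δ) * LIN)
    (α : ℝ) (hα0 : 0 < α) (hα : α ≤ δ * LIN) :
    ∃ x'' : Fin n → ℝ,
      (∀ j, 0 ≤ x'' j) ∧ (∀ i, b i ≤ A.mulVec x'' i) ∧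
      ∑ j, c j * x'' j ≤ (1 + δ) * LIN - α ∧
      ∑ j, |x' j - x'' j| ≤
        α * (1 / δ + 1) * ((∑ j, |x' j|) + (∑ j, |xOPT j|)) / (∑ j, c j * x' j) := by
  have hδL : 0 < δ * LIN := mul_pos hδ hLINpos
  set t : ℝ := α / (δ * LIN) with ht
  have ht0 : 0 < t := div_pos hα0 hδL
  have ht1 : t ≤ 1 := (div_le_one hδL).mpr hα
  refine ⟨fun j => (1 - t) * x' j + t * xOPT j, ?_, ?_, ?_, ?_⟩
  · intro j
    have h1 := hx'nonneg j
    have h2 := hxOPTnonneg j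
    show 0 ≤ (1 - t) * x' j + t * xOPT j
    nlinarith
  · intro i
    have h1 := hx'feas i
    have h2 := hxOPTfeas i
    have hmv : A.mulVec (fun j => (1 - t) * x' j + t * xOPT j) i
        = (1 - t) * A.mulVec x' i + t * A.mulVec xOPT i := by
      simp only [Matrix.mulVec, dotProduct]
      rw [Finset.mul_sum, Finset.mul_sum, ← Finset.sum_add_distrib]
      congr 1; ext j; ring
    rw [hmv]
    nlinarith
  · have hsum : ∑ j, c j * ((1 - t) * x' j + t * xOPT j)
        = (1 - t) * (∑ j, c j * x' j) + t * (∑ j, c j * xOPT j) := by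
      rw [Finset.mul_sum, Finset.mul_sum, ← Finset.sum_add_distrib]
      congr 1; ext j; ring
    rw [hsum, hx'val, ← hLIN]
    have : t * (δ * LIN) = α := div_mul_cancel₀ α (ne_of_gt hδL)
    nlinarith
  · have hbound : ∑ j, |x' j - ((1 - t) * x' j + t * xOPT j)|
        ≤ t * ((∑ j, |x' j|) + (∑ j, |xOPT j|)) := by
      rw [mul_add, Finset.mul_sum, Finset.mul_sum, ← Finset.sum_add_distrib]
      apply Finset.sum_le_sum
      intro j _
      have h : x' j - ((1 - t) * x' j + t * xOPT j) = t * (x' j - xOPT j) := by ring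
      rw [h, abs_mul, abs_of_pos ht0, ← mul_add]
      exact mul_le_mul_of_nonneg_left (abs_sub (x' j) (xOPT j)) ht0.le
    refine hbound.trans ?_
    rw [hx'val]
    have hden : (0:ℝ) < (1 + δ) * LIN := by nlinarith
    have key : t = α * (1 / δ + 1) / ((1 + δ) * LIN) := by
      rw [ht]; field_simp
    rw [key, div_mul_eq_mul_div]
end

section
/- Let A be an m×n real matrix with nonnegative entries and b ∈ ℝ^m nonnegative, and suppose the LP min{‖x‖₁ : Ax ≥ b, x ≥ 0} has an optimal solution with optimal value LIN > 0. Let δ > 0 and α > 0, and let x' be a feasible solution with ‖x'‖₁ ≤ (1+δ)·LIN and ‖x'‖₁ ≥ α·(1/δ + 1). Then there exists a feasible solution x'' with ‖x''‖₁ ≤ (1+δ)·LIN − α and ‖x'' − x'‖₁ ≤ 2α·(1/δ + 1). -/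
open Finset

theorem lp_improve_l1
    (m n : ℕ) (hm : 0 < m) (hn : 0 < n)
    (A : Matrix (Fin m) (Fin n) ℝ) (hA : ∀ i j, 0 ≤ A i j)
    (b : Fin m → ℝ) (hb : ∀ i, 0 ≤ b i)
    (xOPT : Fin n → ℝ)
    (hxOPTnonneg : ∀ j, 0 ≤ xOPT j)
    (hxOPTfeas : ∀ i, b i ≤ A.mulVec xOPT i)
    (hxOPTopt : ∀ x : Fin n → ℝ, (∀ j, 0 ≤ x j) → (∀ i, b i ≤ A.mulVec x i) →
      ∑ j, |xOPT j| ≤ ∑ j, |x j|)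
    (LIN : ℝ) (hLIN : LIN = ∑ j, |xOPT j|) (hLINpos : 0 < LIN)
    (δ : ℝ) (hδ : 0 < δ) (α : ℝ) (hα : 0 < α)
    (x' : Fin n → ℝ)
    (hx'nonneg : ∀ j, 0 ≤ x' j)
    (hx'feas : ∀ i, b i ≤ A.mulVec x' i)
    (hx'val : ∑ j, |x' j| ≤ (1 + δ) * LIN)
    (hx'big : α * (1 / δ + 1) ≤ ∑ j, |x' j|) :
    ∃ x'' : Fin n → ℝ,
      (∀ j, 0 ≤ x'' j) ∧ (∀ i, b i ≤ A.mulVec x'' i) ∧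
      ∑ j, |x'' j| ≤ (1 + δ) * LIN - α ∧
      ∑ j, |x'' j - x' j| ≤ 2 * α * (1 / δ + 1) := by
  obtain ⟨S, hSdef⟩ : ∃ S : ℝ, S = ∑ j, x' j := ⟨_, rfl⟩
  obtain ⟨L, hLdef⟩ : ∃ L : ℝ, L = ∑ j, xOPT j := ⟨_, rfl⟩
  have habs' : ∑ j, |x' j| = S := by
    rw [hSdef]; exact Finset.sum_congr rfl fun j _ => abs_of_nonneg (hx'nonneg j)
  have habsO : ∑ j, |xOPT j| = L := by
    rw [hLdef]; exact Finset.sum_congr rfl fun j _ => abs_of_nonneg (hxOPTnonneg j)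
  have hLL : LIN = L := by rw [hLIN, habsO]
  have hLS : L ≤ S := by
    have := hxOPTopt x' hx'nonneg hx'feas
    rwa [habs', habsO] at this
  have hSub : S ≤ (1 + δ) * L := by rw [habs', hLL] at hx'val; exact hx'val
  have hSlb : α * (1 / δ + 1) ≤ S := by rwa [habs'] at hx'big
  have hc : (0:ℝ) < α * (1 / δ + 1) := by positivity
  have hSpos : 0 < S := lt_of_lt_of_le hc hSlb
  have hLpos : 0 < L := by rwa [hLL] at hLINpos
  obtain ⟨t, htdef⟩ : ∃ t : ℝ, t = α * (1 / δ + 1) / S := ⟨_, rfl⟩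
  have htpos : 0 < t := by rw [htdef]; positivity
  have htS : t * S = α * (1 / δ + 1) := by
    rw [htdef]; field_simp; try ring
  have ht1 : t ≤ 1 := by
    rw [htdef, div_le_one hSpos]; exact hSlb
  have ht0 : 0 ≤ 1 - t := by linarith
  refine ⟨fun j => (1 - t) * x' j + t * xOPT j, ?_, ?_, ?_, ?_⟩
  · intro j
    have := hx'nonneg j; have := hxOPTnonneg j
    positivity
  · intro i
    have hlin : A.mulVec (fun j => (1 - t) * x' j + t * xOPT j) i
        = (1 - t) * A.mulVec x' i + t * A.mulVec xOPT i := by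
      simp only [Matrix.mulVec, dotProduct, Finset.mul_sum,
        ← Finset.sum_add_distrib]
      exact Finset.sum_congr rfl fun j _ => by ring
    rw [hlin]
    have h1 := hx'feas i
    have h2 := hxOPTfeas i
    nlinarith [mul_le_mul_of_nonneg_left h1 ht0, mul_le_mul_of_nonneg_left h2 htpos.le]
  · have hval : ∑ j, |(1 - t) * x' j + t * xOPT j| = (1 - t) * S + t * L := by
      rw [hSdef, hLdef, Finset.mul_sum, Finset.mul_sum, ← Finset.sum_add_distrib]
      refine Finset.sum_congr rfl fun j _ => ?_
      have h1 := hx'nonneg j; have h2 := hxOPTnonneg j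
      rw [abs_of_nonneg (by positivity)]
    rw [hval, hLL]
    have e1 : δ * (t * S) = α * (1 + δ) := by
      rw [htS]; field_simp; try ring
    have e2 : δ * (t * L * S) = α * (1 + δ) * L := by
      rw [htdef]; field_simp
    have hδS : α * (1 + δ) ≤ δ * S := by
      have h : α * (1 + δ) = δ * (α * (1 / δ + 1)) := by field_simp; try ring
      rw [h]
      exact mul_le_mul_of_nonneg_left hSlb hδ.le
    have key : 0 ≤ ((1 + δ) * L - S) * (δ * S - α) := by
      apply mul_nonneg (by linarith)
      nlinarith
    have expand : δ * S * ((1 + δ) * L - α - ((1 - t) * S + t * L))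
        = ((1 + δ) * L - S) * (δ * S - α) := by
      linear_combination S * e1 - e2
    nlinarith [mul_pos hδ hSpos]
  · have hrw : ∑ j, |(1 - t) * x' j + t * xOPT j - x' j|
        = ∑ j, t * |xOPT j - x' j| := by
      refine Finset.sum_congr rfl fun j _ => ?_
      have hj : (1 - t) * x' j + t * xOPT j - x' j = t * (xOPT j - x' j) := by ring
      rw [hj, abs_mul, abs_of_nonneg htpos.le]
    rw [hrw]
    have hb2 : ∑ j, t * |xOPT j - x' j| ≤ ∑ j, t * (xOPT j + x' j) := by
      refine Finset.sum_le_sum fun j _ => ?_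
      refine mul_le_mul_of_nonneg_left ?_ htpos.le
      calc |xOPT j - x' j| ≤ |xOPT j| + |x' j| := abs_sub _ _
        _ = xOPT j + x' j := by
          rw [abs_of_nonneg (hxOPTnonneg j), abs_of_nonneg (hx'nonneg j)]
    have hb3 : ∑ j, t * (xOPT j + x' j) = t * (L + S) := by
      rw [← Finset.mul_sum, Finset.sum_add_distrib, ← hLdef, ← hSdef]
    have hb4 : t * (L + S) ≤ 2 * (t * S) := by nlinarith
    rw [htS] at hb4
    linarith
end

section
/- Let A be an m×n real matrix with nonnegative entries and b ∈ ℝ^m nonnegative, with LIN > 0 the attained optimal value of min{‖x‖₁ : Ax ≥ b, x ≥ 0}. Let δ > 0, α > 0, and let x' be feasible with ‖x'‖₁ ≤ (1+δ)·LIN and ‖x'‖₁ ≥ α·(1/δ + 1). Set θ = α·(1/δ + 1)/‖x'‖₁, x^var = θ·x', x^fix = x' − x^var, and b^var = b − A·x^fix. Let x̂ be an optimal solution of the residual LP min{‖x‖₁ : Ax ≥ b^var, x ≥ 0} (assumed attained). Then x'' := x^fix + x̂ satisfies Ax'' ≥ b, x'' ≥ 0, ‖x''‖₁ ≤ (1+δ)·LIN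 − α, and ‖x'' − x'‖₁ ≤ 2α·(1/δ + 1). -/
open Finset

theorem algorithm1_correct
    (m n : ℕ) (hm : 0 < m) (hn : 0 < n)
    (A : Matrix (Fin m) (Fin n) ℝ) (hA : ∀ i j, 0 ≤ A i j)
    (b : Fin m → ℝ) (hb : ∀ i, 0 ≤ b i)
    (xOPT : Fin n → ℝ)
    (hxOPTnonneg : ∀ j, 0 ≤ xOPT j)
    (hxOPTfeas : ∀ i, b i ≤ A.mulVec xOPT i)
    (hxOPTopt : ∀ x : Fin n → ℝ, (∀ j, 0 ≤ x j) → (∀ i, b i ≤ A.mulVec x i) →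
      ∑ j, |xOPT j| ≤ ∑ j, |x j|)
    (LIN : ℝ) (hLIN : LIN = ∑ j, |xOPT j|) (hLINpos : 0 < LIN)
    (δ : ℝ) (hδ : 0 < δ) (α : ℝ) (hα : 0 < α)
    (x' : Fin n → ℝ)
    (hx'nonneg : ∀ j, 0 ≤ x' j)
    (hx'feas : ∀ i, b i ≤ A.mulVec x' i)
    (hx'val : ∑ j, |x' j| ≤ (1 + δ) * LIN)
    (hx'big : α * (1 / δ + 1) ≤ ∑ j, |x' j|)
    (θ : ℝ) (hθ : θ = α * (1 / δ + 1) / ∑ j, |x' j|)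
    (xvar xfix : Fin n → ℝ)
    (hxvar : xvar = fun j => θ * x' j)
    (hxfix : xfix = fun j => x' j - xvar j)
    (bvar : Fin m → ℝ) (hbvar : bvar = fun i => b i - A.mulVec xfix i)
    -- x̂ : optimal solution of the residual LP
    (xhat : Fin n → ℝ)
    (hxhatnonneg : ∀ j, 0 ≤ xhat j)
    (hxhatfeas : ∀ i, bvar i ≤ A.mulVec xhat i)
    (hxhatopt : ∀ x : Fin n → ℝ, (∀ j, 0 ≤ x j) → (∀ i, bvar i ≤ A.mulVec x i) →
      ∑ j, |xhat j| ≤ ∑ j, |x j|)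
    (x'' : Fin n → ℝ) (hx'' : x'' = fun j => xfix j + xhat j) :
    (∀ j, 0 ≤ x'' j) ∧ (∀ i, b i ≤ A.mulVec x'' i) ∧
    ∑ j, |x'' j| ≤ (1 + δ) * LIN - α ∧
    ∑ j, |x'' j - x' j| ≤ 2 * α * (1 / δ + 1) := by
  have hc : 0 < α * (1 / δ + 1) := by positivity
  have hSpos : (0:ℝ) < ∑ j, |x' j| := lt_of_lt_of_le hc hx'big
  set S := ∑ j, |x' j| with hS
  have hSx : S = ∑ j, x' j :=
    Finset.sum_congr rfl (fun j _ => abs_of_nonneg (hx'nonneg j))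
  have hθpos : 0 < θ := by rw [hθ]; positivity
  have hθ1 : θ ≤ 1 := by rw [hθ, div_le_one hSpos]; exact hx'big
  have hθS : θ * S = α * (1 / δ + 1) := by
    rw [hθ]; field_simp
  have hLle : LIN ≤ S := by rw [hLIN]; exact hxOPTopt x' hx'nonneg hx'feas
  have hmul : ∀ (t : ℝ) (x : Fin n → ℝ) (i : Fin m),
      A.mulVec (fun j => t * x j) i = t * A.mulVec x i := by
    intro t x i
    simp only [Matrix.mulVec, dotProduct, Finset.mul_sum]
    exact Finset.sum_congr rfl fun j _ => by ring
  have hxfix' : ∀ j, xfix j = (1 - θ) * x' j := by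
    intro j; rw [hxfix, hxvar]; ring
  have hxfixnn : ∀ j, 0 ≤ xfix j := fun j => by
    rw [hxfix' j]; exact mul_nonneg (by linarith) (hx'nonneg j)
  have hAxfix : ∀ i, A.mulVec xfix i = (1 - θ) * A.mulVec x' i := by
    intro i
    have h : xfix = fun j => (1 - θ) * x' j := funext hxfix'
    rw [h, hmul]
  have h1 : ∀ j, 0 ≤ x'' j := by
    intro j; rw [hx'']; exact add_nonneg (hxfixnn j) (hxhatnonneg j)
  have hadd : ∀ i, A.mulVec x'' i = A.mulVec xfix i + A.mulVec xhat i := by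
    intro i
    rw [hx'']
    simp only [Matrix.mulVec, dotProduct, mul_add]
    exact Finset.sum_add_distrib
  have h2 : ∀ i, b i ≤ A.mulVec x'' i := by
    intro i
    have h := hxhatfeas i
    rw [hbvar] at h
    rw [hadd i]
    simp only at h
    linarith
  have hfeasθopt : ∀ i, bvar i ≤ A.mulVec (fun j => θ * xOPT j) i := by
    intro i
    rw [hmul, hbvar]
    simp only
    rw [hAxfix]
    have hf := hx'feas i
    have hg := hxOPTfeas i
    have hbnn := hb i
    nlinarith [hθ1, hθpos.le]
  have hHle : ∑ j, |xhat j| ≤ θ * LIN := by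
    have h := hxhatopt (fun j => θ * xOPT j)
      (fun j => mul_nonneg hθpos.le (hxOPTnonneg j)) hfeasθopt
    calc ∑ j, |xhat j| ≤ ∑ j, |θ * xOPT j| := h
      _ = θ * LIN := by
          rw [hLIN, Finset.mul_sum]
          exact Finset.sum_congr rfl fun j _ => by
            rw [abs_mul, abs_of_nonneg hθpos.le]
  have hfixsum : ∑ j, |xfix j| = (1 - θ) * S := by
    rw [hSx, Finset.mul_sum]
    exact Finset.sum_congr rfl fun j _ => by
      rw [hxfix' j, abs_of_nonneg (mul_nonneg (by linarith) (hx'nonneg j))]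
  have hsum'' : ∑ j, |x'' j| = (1 - θ) * S + ∑ j, |xhat j| := by
    rw [← hfixsum, ← Finset.sum_add_distrib]
    exact Finset.sum_congr rfl fun j _ => by
      rw [hx'']
      simp only
      rw [abs_of_nonneg (add_nonneg (hxfixnn j) (hxhatnonneg j)),
        abs_of_nonneg (hxfixnn j), abs_of_nonneg (hxhatnonneg j)]
  have hθLS : θ * LIN * S = α * (1 / δ + 1) * LIN := by
    linear_combination LIN * hθS
  have h3 : ∑ j, |x'' j| ≤ (1 + δ) * LIN - α := by
    rw [hsum'']
    have hθSS : θ * S * S = α * (1 / δ + 1) * S := by rw [hθS]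
    have hdc : δ * (α * (1 / δ + 1)) = α + α * δ := by field_simp
    have hd2 : δ * (θ * S * S) = α * (1 + δ) * S := by
      linear_combination δ * hθSS + S * hdc
    have hd3 : δ * (θ * LIN * S) = α * (1 + δ) * LIN := by
      linear_combination δ * hθLS + LIN * hdc
    have hint : ((1 + δ) * LIN - S) * (δ * S - α) ≥ 0 := by
      apply mul_nonneg (by linarith)
      nlinarith [hx'big, hα.le, hδ.le, hdc]
    have hkey : (1 - θ) * S + θ * LIN + α - (1 + δ) * LIN ≤ 0 := by
      by_contra hcon
      push_neg at hcon
      have hp := mul_pos (mul_pos hδ hSpos) hcon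
      have hexp : δ * S * ((1 - θ) * S + θ * LIN + α - (1 + δ) * LIN)
          = δ * (S * S) - δ * (θ * S * S) + δ * (θ * LIN * S) + δ * (α * S)
            - δ * ((1 + δ) * LIN * S) := by ring
      have hintexp : ((1 + δ) * LIN - S) * (δ * S - α)
          = δ * ((1 + δ) * LIN * S) - α * (1 + δ) * LIN - δ * (S * S) + α * S := by
        ring
      rw [hexp] at hp
      rw [hintexp] at hint
      linarith [hp, hint, hd2, hd3]
    linarith
  have hvarsum : ∑ j, |xvar j| = θ * S := by
    rw [hSx, Finset.mul_sum]
    exact Finset.sum_congr rfl fun j _ => by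
      rw [hxvar]
      simp only
      rw [abs_of_nonneg (mul_nonneg hθpos.le (hx'nonneg j))]
  have h4 : ∑ j, |x'' j - x' j| ≤ 2 * α * (1 / δ + 1) := by
    have heq : ∀ j, x'' j - x' j = xhat j - xvar j := by
      intro j; rw [hx'', hxfix]; simp only; ring
    have hb1 : ∑ j, |x'' j - x' j| ≤ ∑ j, (|xhat j| + |xvar j|) := by
      apply Finset.sum_le_sum
      intro j _
      rw [heq j]; exact abs_sub (xhat j) (xvar j)
    rw [Finset.sum_add_distrib, hvarsum] at hb1
    have : θ * LIN ≤ θ * S := mul_le_mul_of_nonneg_left hLle hθpos.le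
    linarith [hb1, hHle, this, hθS]
  exact ⟨h1, h2, h3, h4⟩
end

section
/- Let A be an m×n real matrix with nonnegative entries and b ∈ ℝ^m nonnegative, with LIN > 0 the attained optimal value of min{‖x‖₁ : Ax ≥ b, x ≥ 0}. Let δ > 0, α > 0, and let x' be feasible with ‖x'‖₁ ≤ (1+δ)·LIN and ‖x'‖₁ ≥ 2α·(1/δ + 1). Set θ = 2α·(1/δ + 1)/‖x'‖₁, x^var = θ·x', x^fix = x' − x^var, and b^var = b − A·x^fix. Let x̂ satisfy A x̂ ≥ b^var, x̂ ≥ 0, and ‖x̂‖₁ ≤ (1 + δ/2)·min{‖x‖₁ : Ax ≥ b^var, x ≥ 0}. Define x'' = x^fix + x̂ if ‖x^fix + x̂‖₁ < ‖x'‖₁, and x'' = x' otherwise. Then x'' is feasible, ‖x''‖₁ ≤ (1+δ)·LIN − α, and ‖x'' − x'‖₁ ≤ 4α·(1/δ + 1). -/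
open Finset

set_option maxHeartbeats 1600000 in
theorem algorithm2_correct
    (m n : ℕ) (hm : 0 < m) (hn : 0 < n)
    (A : Matrix (Fin m) (Fin n) ℝ) (hA : ∀ i j, 0 ≤ A i j)
    (b : Fin m → ℝ) (hb : ∀ i, 0 ≤ b i)
    (xOPT : Fin n → ℝ)
    (hxOPTnonneg : ∀ j, 0 ≤ xOPT j)
    (hxOPTfeas : ∀ i, b i ≤ A.mulVec xOPT i)
    (hxOPTopt : ∀ x : Fin n → ℝ, (∀ j, 0 ≤ x j) → (∀ i, b i ≤ A.mulVec x i) →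
      ∑ j, |xOPT j| ≤ ∑ j, |x j|)
    (LIN : ℝ) (hLIN : LIN = ∑ j, |xOPT j|) (hLINpos : 0 < LIN)
    (δ : ℝ) (hδ : 0 < δ) (α : ℝ) (hα : 0 < α)
    (x' : Fin n → ℝ)
    (hx'nonneg : ∀ j, 0 ≤ x' j)
    (hx'feas : ∀ i, b i ≤ A.mulVec x' i)
    (hx'val : ∑ j, |x' j| ≤ (1 + δ) * LIN)
    (hx'big : 2 * α * (1 / δ + 1) ≤ ∑ j, |x' j|)
    (θ : ℝ) (hθ : θ = 2 * α * (1 / δ + 1) / ∑ j, |x' j|)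
    (xvar xfix : Fin n → ℝ)
    (hxvar : xvar = fun j => θ * x' j)
    (hxfix : xfix = fun j => x' j - xvar j)
    (bvar : Fin m → ℝ) (hbvar : bvar = fun i => b i - A.mulVec xfix i)
    -- zres : an optimal solution of the residual LP (attained optimum)
    (zres : Fin n → ℝ)
    (hzresnonneg : ∀ j, 0 ≤ zres j)
    (hzresfeas : ∀ i, bvar i ≤ A.mulVec zres i)
    (hzresopt : ∀ x : Fin n → ℝ, (∀ j, 0 ≤ x j) → (∀ i, bvar i ≤ A.mulVec x i) →
      ∑ j, |zres j| ≤ ∑ j, |x j|)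
    -- x̂ : an approximate solution of the residual LP with ratio (1 + δ/2)
    (xhat : Fin n → ℝ)
    (hxhatnonneg : ∀ j, 0 ≤ xhat j)
    (hxhatfeas : ∀ i, bvar i ≤ A.mulVec xhat i)
    (hxhatapx : ∑ j, |xhat j| ≤ (1 + δ / 2) * ∑ j, |zres j|)
    (x'' : Fin n → ℝ)
    (hx'' : x'' = if (∑ j, |xfix j + xhat j|) < ∑ j, |x' j|
      then fun j => xfix j + xhat j else x') :
    (∀ j, 0 ≤ x'' j) ∧ (∀ i, b i ≤ A.mulVec x'' i) ∧
    ∑ j, |x'' j| ≤ (1 + δ) * LIN - α ∧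
    ∑ j, |x'' j - x' j| ≤ 4 * α * (1 / δ + 1) := by

  have habs : ∀ (f : Fin n → ℝ), (∀ j, 0 ≤ f j) → (∑ j, |f j|) = ∑ j, f j :=
    fun f hf => Finset.sum_congr rfl fun j _ => abs_of_nonneg (hf j)
  have hmv : ∀ (x : Fin n → ℝ) (i : Fin m), A.mulVec x i = ∑ j, A i j * x j :=
    fun x i => rfl
  set T : ℝ := 2 * α * (1 / δ + 1) with hTdef
  have hT0 : 0 < T := by positivity
  set S : ℝ := ∑ j, |x' j| with hSdef
  have hTS : T ≤ S := hx'big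
  have hS0 : 0 < S := lt_of_lt_of_le hT0 hTS
  have hSsum : S = ∑ j, x' j := habs _ hx'nonneg
  have hθval : θ * S = T := by rw [hθ]; field_simp
  have hθ0 : 0 < θ := by rw [hθ]; positivity
  have hθ1 : θ ≤ 1 := by rw [hθ, div_le_one hS0]; exact hTS
  have hxfixval : ∀ j, xfix j = (1 - θ) * x' j := by
    intro j; rw [hxfix, hxvar]; ring
  have hxfixnn : ∀ j, 0 ≤ xfix j := fun j => by
    rw [hxfixval]; exact mul_nonneg (by linarith) (hx'nonneg j)
  have hsumnn : ∀ j, 0 ≤ xfix j + xhat j := fun j => add_nonneg (hxfixnn j) (hxhatnonneg j)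
  have hbvar' : ∀ i, bvar i = b i - A.mulVec xfix i := fun i => by rw [hbvar]
  have hmvfix : ∀ i, A.mulVec xfix i = (1 - θ) * A.mulVec x' i := by
    intro i
    rw [hmv, hmv, Finset.mul_sum]
    exact Finset.sum_congr rfl fun j _ => by rw [hxfixval]; ring
  -- feasibility of xfix + xhat
  have hfeas2 : ∀ i, b i ≤ A.mulVec (fun j => xfix j + xhat j) i := by
    intro i
    have h1 : A.mulVec (fun j => xfix j + xhat j) i
        = A.mulVec xfix i + A.mulVec xhat i := by
      rw [hmv, hmv, hmv, ← Finset.sum_add_distrib]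
      exact Finset.sum_congr rfl fun j _ => by ring
    have h2 := hxhatfeas i
    rw [hbvar' i] at h2
    linarith [h1.ge]
  -- L ≤ S
  have hv : LIN ≤ S := by rw [hLIN]; exact hxOPTopt x' hx'nonneg hx'feas
  have hu : S ≤ (1 + δ) * LIN := hx'val
  -- RES ≤ θ * LIN
  have hRES : (∑ j, |zres j|) ≤ θ * LIN := by
    have hfeasres : ∀ i, bvar i ≤ A.mulVec (fun j => θ * xOPT j) i := by
      intro i
      have h1 : A.mulVec (fun j => θ * xOPT j) i = θ * A.mulVec xOPT i := by
        rw [hmv, hmv, Finset.mul_sum]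
        exact Finset.sum_congr rfl fun j _ => by ring
      have h2 := hx'feas i
      have h3 := hxOPTfeas i
      have h4 : bvar i ≤ θ * b i := by
        rw [hbvar' i, hmvfix i]
        nlinarith [hb i]
      rw [h1]
      nlinarith
    have := hzresopt (fun j => θ * xOPT j) (fun j => mul_nonneg hθ0.le (hxOPTnonneg j)) hfeasres
    calc (∑ j, |zres j|) ≤ ∑ j, |θ * xOPT j| := this
      _ = θ * LIN := by
          rw [hLIN, Finset.mul_sum]
          exact Finset.sum_congr rfl fun j _ => by
            rw [abs_mul, abs_of_nonneg hθ0.le]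
  have hxhatsum : (∑ j, xhat j) ≤ (1 + δ / 2) * (θ * LIN) := by
    have h1 : (∑ j, xhat j) = ∑ j, |xhat j| := (habs _ hxhatnonneg).symm
    have h2 : (1 + δ / 2) * (∑ j, |zres j|) ≤ (1 + δ / 2) * (θ * LIN) :=
      mul_le_mul_of_nonneg_left hRES (by linarith)
    linarith [hxhatapx]
  -- key inequality
  have e0 : δ * T = 2 * α * (1 + δ) := by
    rw [hTdef]; field_simp
  have hp : 0 ≤ ((1 + δ) * LIN - S) * (δ * S - α * (2 + δ)) := by
    apply mul_nonneg (by linarith)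
    nlinarith [mul_le_mul_of_nonneg_left hTS hδ.le]
  have h7 : δ * (((1 + δ) * LIN - α - S + T) * S - (1 + δ / 2) * (T * LIN))
      = ((1 + δ) * LIN - S) * (δ * S - α * (2 + δ)) := by
    linear_combination (S - LIN - (δ / 2) * LIN) * e0
  have hstep : (1 + δ / 2) * (T * LIN) ≤ ((1 + δ) * LIN - α - S + T) * S := by
    nlinarith [h7, hp, hδ]
  have hθL : (1 + δ / 2) * (θ * LIN) * S = (1 + δ / 2) * (T * LIN) := by
    linear_combination (1 + δ / 2) * LIN * hθval
  have key : (1 + δ / 2) * (θ * LIN) ≤ (1 + δ) * LIN - α - S + T := by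
    have h8 : (1 + δ / 2) * (θ * LIN) * S ≤ ((1 + δ) * LIN - α - S + T) * S := by
      rw [hθL]; exact hstep
    exact le_of_mul_le_mul_right h8 hS0
  -- norm of xfix + xhat
  have hfixsum : (∑ j, xfix j) = S - T := by
    calc (∑ j, xfix j) = ∑ j, (1 - θ) * x' j :=
          Finset.sum_congr rfl fun j _ => by rw [hxfixval]
      _ = (1 - θ) * S := by rw [hSsum, Finset.mul_sum]
      _ = S - T := by linear_combination - hθval
  have hNval : (∑ j, |xfix j + xhat j|) = (S - T) + ∑ j, xhat j := by
    rw [habs _ hsumnn, Finset.sum_add_distrib, hfixsum]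
  have hNle : (∑ j, |xfix j + xhat j|) ≤ (1 + δ) * LIN - α := by
    rw [hNval]; linarith [hxhatsum, key]
  refine ⟨?_, ?_, ?_, ?_⟩
  · intro j; rw [hx'']; split_ifs with h
    · exact hsumnn j
    · exact hx'nonneg j
  · intro i; rw [hx'']; split_ifs with h
    · exact hfeas2 i
    · exact hx'feas i
  · rw [hx'']; split_ifs with h
    · exact hNle
    · push_neg at h
      calc S ≤ ∑ j, |xfix j + xhat j| := h
        _ ≤ (1 + δ) * LIN - α := hNle
  · rw [hx'']; split_ifs with h
    · -- ∑ |xhat j - θ x' j| ≤ 2 T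
      have hd : (∑ j, |xfix j + xhat j - x' j|) ≤ (∑ j, xhat j) + T := by
        have h1 : ∀ j, |xfix j + xhat j - x' j| ≤ xhat j + θ * x' j := by
          intro j
          have : xfix j + xhat j - x' j = xhat j - θ * x' j := by
            rw [hxfixval]; ring
          rw [this]
          calc |xhat j - θ * x' j| ≤ |xhat j| + |θ * x' j| := abs_sub _ _
            _ = xhat j + θ * x' j := by
                rw [abs_of_nonneg (hxhatnonneg j),
                  abs_of_nonneg (mul_nonneg hθ0.le (hx'nonneg j))]
        calc (∑ j, |xfix j + xhat j - x' j|) ≤ ∑ j, (xhat j + θ * x' j) :=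
              Finset.sum_le_sum fun j _ => h1 j
          _ = (∑ j, xhat j) + θ * S := by
              rw [Finset.sum_add_distrib, hSsum, Finset.mul_sum]
          _ = (∑ j, xhat j) + T := by rw [hθval]
      have hxhatlt : (∑ j, xhat j) < T := by
        rw [hNval] at h; linarith
      have : (4 : ℝ) * α * (1 / δ + 1) = 2 * T := by rw [hTdef]; ring
      rw [this]; linarith
    · simp only [sub_self, abs_zero, Finset.sum_const_zero]
      positivity
end

section
/- Let A be an m×n real matrix with nonnegative entries and b ∈ ℝ^m nonnegative, with LIN > 0 the attained optimal value of min{‖x‖₁ : Ax ≥ b, x ≥ 0}. Let δ > 0, α > 0, and let x' be feasible with ‖x'‖₁ = (1+δ')·LIN for some δ' ≥ δ and ‖x'‖₁ ≥ 2α·(1/δ + 1). Set θ = 2α·(1/δ + 1)/‖x'‖₁, x^var = θ·x', x^fix = x' − x^var, and b^var = b − A·x^fix. Let x̂ satisfy A x̂ ≥ b^var, x̂ ≥ 0, and ‖x̂‖₁ ≤ (1 + δ/2)·min{‖x‖₁ : Ax ≥ b^var, x ≥ 0}. Define x'' = x^fix + x̂ if ‖x^fix + x̂‖₁ < ‖x'‖₁,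 and x'' = x' otherwise. Then x'' is feasible, ‖x''‖₁ ≤ ‖x'‖₁ − α = (1+δ')·LIN − α, and ‖x'' − x'‖₁ ≤ 4α·(1/δ + 1). -/
open Finset Matrix

/-!
Write `K = 2α(1/δ + 1)`, so that `θ‖x'‖₁ = K`. Keeping the fixed part `(1 - θ)x'` releases a
budget `K` from `x'`. Since `θ · xOPT` is feasible for the residual program, the residual optimum
is at most `θ · LIN = K / (1 + δ') ≤ K / (1 + δ)`, and `K` is chosen so that
`(1 + δ/2) K = (K - α)(1 + δ)`: the approximate residual solution costs at most `K - α`. Hence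
`xfix + x̂` costs at most `‖x'‖₁ - α`, and it differs from `x'` by `x̂ - θx'`, of norm at most `2K`.
-/

section SumAbs

variable {ι R : Type*} [Fintype ι] [CommRing R] [LinearOrder R] [IsStrictOrderedRing R]

theorem sum_abs_smul (c : R) (x : ι → R) : ∑ j, |(c • x) j| = |c| * ∑ j, |x j| := by
  simp only [Pi.smul_apply, smul_eq_mul, abs_mul, mul_sum]

theorem sum_abs_add_of_nonneg {x y : ι → R} (hx : 0 ≤ x) (hy : 0 ≤ y) :
    ∑ j, |x j + y j| = ∑ j, |x j| + ∑ j, |y j| := by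
  rw [← sum_add_distrib]
  refine sum_congr rfl fun j _ => ?_
  rw [abs_of_nonneg (add_nonneg (hx j) (hy j)), abs_of_nonneg (hx j), abs_of_nonneg (hy j)]

theorem sum_abs_sub_le (x y : ι → R) : ∑ j, |x j - y j| ≤ ∑ j, |x j| + ∑ j, |y j| := by
  rw [← sum_add_distrib]
  exact sum_le_sum fun j _ => abs_sub _ _

theorem sum_abs_smul_add_sub_le {θ : R} (hθ₀ : 0 ≤ θ) (x y : ι → R) :
    ∑ j, |((1 - θ) • x) j + y j - x j| ≤ ∑ j, |y j| + θ * ∑ j, |x j| := by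
  calc ∑ j, |((1 - θ) • x) j + y j - x j| = ∑ j, |y j - (θ • x) j| := by
        simp only [Pi.smul_apply, smul_eq_mul]; congr! 2; ring
    _ ≤ ∑ j, |y j| + ∑ j, |(θ • x) j| := sum_abs_sub_le y (θ • x)
    _ = ∑ j, |y j| + θ * ∑ j, |x j| := by rw [sum_abs_smul, abs_of_nonneg hθ₀]

end SumAbs

theorem Matrix.sub_mulVec_smul_le_mulVec_smul {m n R : Type*} [Fintype n] [CommRing R]
    [PartialOrder R] [IsOrderedRing R] {A : Matrix m n R} {b : m → R} {x y : n → R} {θ : R}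
    (hx : b ≤ A *ᵥ x) (hy : b ≤ A *ᵥ y) (hθ₀ : 0 ≤ θ) (hθ₁ : θ ≤ 1) :
    b - A *ᵥ ((1 - θ) • x) ≤ A *ᵥ (θ • y) := by
  rw [mulVec_smul, mulVec_smul]
  calc b - (1 - θ) • A *ᵥ x ≤ b - (1 - θ) • b := by gcongr
    _ = θ • b := by module
    _ ≤ θ • A *ᵥ y := smul_le_smul_of_nonneg_left hy hθ₀

theorem sum_abs_le_of_forall_residual_le {m n R : Type*} [Fintype n] [CommRing R]
    [LinearOrder R] [IsStrictOrderedRing R] {A : Matrix m n R} {b : m → R} {x y z : n → R}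
    {θ : R} (hx : b ≤ A *ᵥ x) (hy₀ : 0 ≤ y) (hy : b ≤ A *ᵥ y) (hθ₀ : 0 ≤ θ) (hθ₁ : θ ≤ 1)
    (hz : ∀ w : n → R, 0 ≤ w → b - A *ᵥ ((1 - θ) • x) ≤ A *ᵥ w → ∑ j, |z j| ≤ ∑ j, |w j|) :
    ∑ j, |z j| ≤ θ * ∑ j, |y j| := by
  calc ∑ j, |z j| ≤ ∑ j, |(θ • y) j| :=
        hz _ (smul_nonneg hθ₀ hy₀) (sub_mulVec_smul_le_mulVec_smul hx hy hθ₀ hθ₁)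
    _ = θ * ∑ j, |y j| := by rw [sum_abs_smul, abs_of_nonneg hθ₀]

theorem one_add_half_mul_le_of_mul_one_add_le {δ δ' α t : ℝ} (hδ : 0 < δ) (hα : 0 < α)
    (hδ' : δ ≤ δ') (ht : t * (1 + δ') ≤ 2 * α * (1 / δ + 1)) :
    (1 + δ / 2) * t ≤ 2 * α * (1 / δ + 1) - α := by
  have hKα : 0 ≤ 2 * α * (1 / δ + 1) - α := by
    have : 0 ≤ 2 * α * (1 / δ) := by positivity
    linarith
  rw [← mul_le_mul_iff_left₀ (by linarith : (0 : ℝ) < 1 + δ')]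
  calc (1 + δ / 2) * t * (1 + δ') ≤ (1 + δ / 2) * (2 * α * (1 / δ + 1)) := by
        rw [mul_assoc]; gcongr
    _ = (2 * α * (1 / δ + 1) - α) * (1 + δ) := by field_simp; ring
    _ ≤ (2 * α * (1 / δ + 1) - α) * (1 + δ') := by gcongr

theorem algorithm2_decrease_general
    (m n : ℕ)
    (A : Matrix (Fin m) (Fin n) ℝ)
    (b : Fin m → ℝ)
    (xOPT : Fin n → ℝ)
    (hxOPTnonneg : ∀ j, 0 ≤ xOPT j)
    (hxOPTfeas : ∀ i, b i ≤ A.mulVec xOPT i)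
    (LIN : ℝ) (hLIN : LIN = ∑ j, |xOPT j|)
    (δ : ℝ) (hδ : 0 < δ) (α : ℝ) (hα : 0 < α)
    (x' : Fin n → ℝ)
    (hx'nonneg : ∀ j, 0 ≤ x' j)
    (hx'feas : ∀ i, b i ≤ A.mulVec x' i)
    (δ' : ℝ) (hδ' : δ ≤ δ')
    (hx'val : ∑ j, |x' j| = (1 + δ') * LIN)
    (hx'big : 2 * α * (1 / δ + 1) ≤ ∑ j, |x' j|)
    (θ : ℝ) (hθ : θ = 2 * α * (1 / δ + 1) / ∑ j, |x' j|)
    (xvar xfix : Fin n → ℝ)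
    (hxvar : xvar = fun j => θ * x' j)
    (hxfix : xfix = fun j => x' j - xvar j)
    (bvar : Fin m → ℝ) (hbvar : bvar = fun i => b i - A.mulVec xfix i)
    -- zres : an optimal solution of the residual LP (attained optimum)
    (zres : Fin n → ℝ)
    (hzresopt : ∀ x : Fin n → ℝ, (∀ j, 0 ≤ x j) → (∀ i, bvar i ≤ A.mulVec x i) →
      ∑ j, |zres j| ≤ ∑ j, |x j|)
    -- x̂ : an approximate solution of the residual LP with ratio (1 + δ/2)
    (xhat : Fin n → ℝ)
    (hxhatnonneg : ∀ j, 0 ≤ xhat j)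
    (hxhatfeas : ∀ i, bvar i ≤ A.mulVec xhat i)
    (hxhatapx : ∑ j, |xhat j| ≤ (1 + δ / 2) * ∑ j, |zres j|)
    (x'' : Fin n → ℝ)
    (hx'' : x'' = if (∑ j, |xfix j + xhat j|) < ∑ j, |x' j|
      then fun j => xfix j + xhat j else x') :
    (∀ j, 0 ≤ x'' j) ∧ (∀ i, b i ≤ A.mulVec x'' i) ∧
    ∑ j, |x'' j| ≤ (∑ j, |x' j|) - α ∧ (∑ j, |x' j|) - α = (1 + δ') * LIN - α ∧
    ∑ j, |x'' j - x' j| ≤ 4 * α * (1 / δ + 1) := by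
  replace hbvar : bvar = b - A *ᵥ xfix := hbvar
  subst hbvar
  set S := ∑ j, |x' j|
  set K := 2 * α * (1 / δ + 1)
  have hS : 0 < S := (by positivity : 0 < K).trans_le hx'big
  have hθ₀ : 0 ≤ θ := by rw [hθ]; positivity
  have hθ₁ : θ ≤ 1 := by rw [hθ, div_le_one hS]; exact hx'big
  have hθS : θ * S = K := by rw [hθ]; field_simp
  have hxfix_eq : xfix = (1 - θ) • x' := by
    ext j; simp only [hxfix, hxvar, Pi.smul_apply, smul_eq_mul]; ring
  have hxfix_nonneg : 0 ≤ xfix := hxfix_eq ▸ smul_nonneg (sub_nonneg.2 hθ₁) hx'nonneg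
  have hxhat : ∑ j, |xhat j| ≤ K - α := by
    have hzres : ∑ j, |zres j| ≤ θ * LIN := hLIN ▸
      sum_abs_le_of_forall_residual_le hx'feas hxOPTnonneg hxOPTfeas hθ₀ hθ₁ (hxfix_eq ▸ hzresopt)
    refine hxhatapx.trans (one_add_half_mul_le_of_mul_one_add_le hδ hα hδ' ?_)
    calc (∑ j, |zres j|) * (1 + δ') ≤ θ * LIN * (1 + δ') := by gcongr; linarith
      _ = K := by rw [← hθS, hx'val]; ring
  have hnew : ∑ j, |xfix j + xhat j| ≤ S - α := by
    rw [sum_abs_add_of_nonneg hxfix_nonneg hxhatnonneg, hxfix_eq, sum_abs_smul,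
      abs_of_nonneg (sub_nonneg.2 hθ₁)]
    linarith
  have hx''_eq : x'' = fun j => xfix j + xhat j := by
    rw [hx'', if_pos (hnew.trans_lt (by linarith))]
  subst hx''_eq
  refine ⟨add_nonneg hxfix_nonneg hxhatnonneg, ?_, hnew, by rw [hx'val], ?_⟩
  · have hfeas : b ≤ A *ᵥ xfix + A *ᵥ xhat := sub_le_iff_le_add'.1 hxhatfeas
    rwa [← mulVec_add] at hfeas
  · have hmove := hxfix_eq ▸ sum_abs_smul_add_sub_le hθ₀ x' xhat
    linarith

theorem algorithm2_decrease
    (m n : ℕ) (hm : 0 < m) (hn : 0 < n)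
    (A : Matrix (Fin m) (Fin n) ℝ) (hA : ∀ i j, 0 ≤ A i j)
    (b : Fin m → ℝ) (hb : ∀ i, 0 ≤ b i)
    (xOPT : Fin n → ℝ)
    (hxOPTnonneg : ∀ j, 0 ≤ xOPT j)
    (hxOPTfeas : ∀ i, b i ≤ A.mulVec xOPT i)
    (hxOPTopt : ∀ x : Fin n → ℝ, (∀ j, 0 ≤ x j) → (∀ i, b i ≤ A.mulVec x i) →
      ∑ j, |xOPT j| ≤ ∑ j, |x j|)
    (LIN : ℝ) (hLIN : LIN = ∑ j, |xOPT j|) (hLINpos : 0 < LIN)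
    (δ : ℝ) (hδ : 0 < δ) (α : ℝ) (hα : 0 < α)
    (x' : Fin n → ℝ)
    (hx'nonneg : ∀ j, 0 ≤ x' j)
    (hx'feas : ∀ i, b i ≤ A.mulVec x' i)
    (δ' : ℝ) (hδ' : δ ≤ δ')
    (hx'val : ∑ j, |x' j| = (1 + δ') * LIN)
    (hx'big : 2 * α * (1 / δ + 1) ≤ ∑ j, |x' j|)
    (θ : ℝ) (hθ : θ = 2 * α * (1 / δ + 1) / ∑ j, |x' j|)
    (xvar xfix : Fin n → ℝ)
    (hxvar : xvar = fun j => θ * x' j)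
    (hxfix : xfix = fun j => x' j - xvar j)
    (bvar : Fin m → ℝ) (hbvar : bvar = fun i => b i - A.mulVec xfix i)
    -- zres : an optimal solution of the residual LP (attained optimum)
    (zres : Fin n → ℝ)
    (hzresnonneg : ∀ j, 0 ≤ zres j)
    (hzresfeas : ∀ i, bvar i ≤ A.mulVec zres i)
    (hzresopt : ∀ x : Fin n → ℝ, (∀ j, 0 ≤ x j) → (∀ i, bvar i ≤ A.mulVec x i) →
      ∑ j, |zres j| ≤ ∑ j, |x j|)
    -- x̂ : an approximate solution of the residual LP with ratio (1 + δ/2)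
    (xhat : Fin n → ℝ)
    (hxhatnonneg : ∀ j, 0 ≤ xhat j)
    (hxhatfeas : ∀ i, bvar i ≤ A.mulVec xhat i)
    (hxhatapx : ∑ j, |xhat j| ≤ (1 + δ / 2) * ∑ j, |zres j|)
    (x'' : Fin n → ℝ)
    (hx'' : x'' = if (∑ j, |xfix j + xhat j|) < ∑ j, |x' j|
      then fun j => xfix j + xhat j else x') :
    (∀ j, 0 ≤ x'' j) ∧ (∀ i, b i ≤ A.mulVec x'' i) ∧
    ∑ j, |x'' j| ≤ (∑ j, |x' j|) - α ∧ (∑ j, |x' j|) - α = (1 + δ') * LIN - α ∧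
    ∑ j, |x'' j - x' j| ≤ 4 * α * (1 / δ + 1) :=
  algorithm2_decrease_general m n A b xOPT hxOPTnonneg hxOPTfeas LIN hLIN δ hδ α hα x' hx'nonneg
    hx'feas δ' hδ' hx'val hx'big θ hθ xvar xfix hxvar hxfix bvar hbvar zres hzresopt xhat
    hxhatnonneg hxhatfeas hxhatapx x'' hx''
end

section
/- Let A be an m×n real matrix with nonnegative entries and b ∈ ℝ^m nonnegative, with LIN > 0 the attained optimal value of min{‖x‖₁ : Ax ≥ b, x ≥ 0}. Let δ > 0 and let α be a positive integer. Let x' be feasible with ‖x'‖₁ ≤ (1+δ)·LIN and ‖x'‖₁ ≥ α·(1/δ + 1), and let y' be an integral feasible solution (y' ∈ ℕ^n, Ay' ≥ b) with ‖y'‖₁ ≤ (1+δ)·LIN + n and y'_i ≥ x'_i for all i. Then there exists an integral feasible solution y'' ∈ ℕ^n with ‖y''‖₁ ≤ (1+δ)·LIN + n − α and Σ_{i : y''_i < y'_i} (y'_i − y''_i) ≤ α·(1/δ + 2). -/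
/-!
Let `T = (1 + δ)·LIN + n - α`. It suffices to find an integral feasible `ℓ` with `∑ ℓ ≤ T` whose
excess `∑ (ℓ - y')₊` over `y'` is at most `α/δ + α`: lowering `max y' ℓ` coordinatewise, but never
below `ℓ`, until its sum drops to `⌊T⌋` then costs at most `α` plus that excess.

If `⌈x'⌉` already has sum at most `T`, it serves as `ℓ` with no excess, since `y' ≥ ⌈x'⌉`.
Otherwise `ℓ = ⌈u⌉` for the feasible point `u = (1 - λ)·x' + λ·x_OPT` with `∑ u = (1 + δ)·LIN - α`.
Writing `t = ∑ x' - (1 + δ)·LIN + α`, the excess is below `λ·LIN + t`, and `0 < t ≤ α ≤ δ·LIN`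
(the last from `‖x'‖₁ ≥ α(1/δ + 1)`) gives `λ·LIN ≤ α/δ`.
-/

open Finset Matrix

section NatVectors

variable {ι : Type*} [Fintype ι]

theorem exists_le_le_sum_eq {ℓ w : ι → ℕ} (hℓw : ℓ ≤ w) {K : ℕ} (hℓK : ∑ j, ℓ j ≤ K)
    (hKw : K ≤ ∑ j, w j) : ∃ v, ℓ ≤ v ∧ v ≤ w ∧ ∑ j, v j = K := by
  classical
  induction K, hℓK using Nat.le_induction with
  | base => exact ⟨ℓ, le_rfl, hℓw, rfl⟩
  | succ K _ ih =>
    obtain ⟨v, hℓv, hvw, rfl⟩ := ih (Nat.le_of_succ_le hKw)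
    obtain ⟨j, hj⟩ : ∃ j, v j < w j := by
      by_contra! h
      exact (sum_le_sum fun j _ => h j).not_gt hKw
    refine ⟨v + Pi.single j 1, hℓv.trans le_self_add, fun k => ?_, ?_⟩
    · by_cases hk : k = j
      · subst hk; simpa using hj
      · simpa [hk] using hvw k
    · simp [sum_add_distrib]

theorem exists_le_sum_le_sum_tsub_le {ℓ y : ι → ℕ} {K a : ℕ} (hℓ : ∑ j, ℓ j ≤ K)
    (hy : ∑ j, y j ≤ K + a) :
    ∃ v, ℓ ≤ v ∧ ∑ j, v j ≤ K ∧ ∑ j, (y j - v j) ≤ a + ∑ j, (ℓ j - y j) := by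
  obtain ⟨w, hyw, hℓw, hw⟩ : ∃ w : ι → ℕ, y ≤ w ∧ ℓ ≤ w ∧
      ∑ j, w j = ∑ j, y j + ∑ j, (ℓ j - y j) :=
    ⟨y ⊔ ℓ, le_sup_left, le_sup_right, by
      rw [← sum_add_distrib]
      exact sum_congr rfl fun j _ => by simp only [Pi.sup_apply]; omega⟩
  obtain ⟨v, hℓv, hvw, hv⟩ := exists_le_le_sum_eq hℓw
    (le_min hℓ (sum_le_sum fun j _ => hℓw j)) (min_le_right K (∑ j, w j))
  refine ⟨v, hℓv, hv ▸ min_le_left _ _, ?_⟩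
  calc ∑ j, (y j - v j) ≤ ∑ j, (w j - v j) :=
        sum_le_sum fun j _ => Nat.sub_le_sub_right (hyw j) _
    _ = ∑ j, w j - ∑ j, v j := sum_tsub_distrib _ fun j _ => hvw j
    _ ≤ a + ∑ j, (ℓ j - y j) := by omega

theorem sum_filter_lt_sub_eq {R : Type*} [AddCommGroupWithOne R] (y v : ι → ℕ) :
    ∑ j ∈ univ.filter (fun j => v j < y j), ((y j : R) - v j) = ((∑ j, (y j - v j) : ℕ) : R) := by
  rw [sum_filter, Nat.cast_sum]
  refine sum_congr rfl fun j _ => ?_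
  split_ifs with h
  · rw [Nat.cast_sub h.le]
  · rw [Nat.sub_eq_zero_of_le (not_lt.1 h), Nat.cast_zero]

theorem exists_le_sum_le_of_sum_le_add {ℓ y : ι → ℕ} {T : ℝ} {a : ℕ}
    (hℓ : ∑ j, (ℓ j : ℝ) ≤ T) (hy : ∑ j, (y j : ℝ) ≤ T + a) :
    ∃ v, ℓ ≤ v ∧ ∑ j, (v j : ℝ) ≤ T ∧
      ∑ j ∈ univ.filter (fun j => v j < y j), ((y j : ℝ) - v j) ≤
        a + ∑ j, ((ℓ j - y j : ℕ) : ℝ) := by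
  have hT : 0 ≤ T := (sum_nonneg fun j _ => Nat.cast_nonneg _).trans hℓ
  have hyK : ∑ j, y j ≤ ⌊T⌋₊ + a := by
    rw [← Nat.floor_add_natCast hT]
    exact Nat.le_floor (by exact_mod_cast hy)
  obtain ⟨v, hℓv, hvK, hyv⟩ :=
    exists_le_sum_le_sum_tsub_le (Nat.le_floor (by exact_mod_cast hℓ)) hyK
  refine ⟨v, hℓv, ?_, ?_⟩
  · calc ∑ j, (v j : ℝ) = ((∑ j, v j : ℕ) : ℝ) := by push_cast; rfl
      _ ≤ T := (Nat.cast_le.2 hvK).trans (Nat.floor_le hT)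
  · rw [sum_filter_lt_sub_eq]
    exact_mod_cast hyv

end NatVectors

theorem Matrix.mulVec_le_mulVec_of_nonneg {R κ ι : Type*} [Semiring R] [PartialOrder R]
    [IsOrderedRing R] [Fintype ι] {A : Matrix κ ι R} (hA : ∀ i j, 0 ≤ A i j) {x y : ι → R}
    (hxy : x ≤ y) : A *ᵥ x ≤ A *ᵥ y :=
  fun i => dotProduct_le_dotProduct_of_nonneg_left hxy (hA i)

theorem Matrix.convex_setOf_le_mulVec {κ ι : Type*} [Fintype ι] (A : Matrix κ ι ℝ)
    (b : κ → ℝ) : Convex ℝ {x : ι → ℝ | b ≤ A *ᵥ x} :=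
  (convex_Ici b).linear_preimage A.mulVecLin

theorem sum_natCeil_le {ι : Type*} [Fintype ι] {x : ι → ℝ} (hx : 0 ≤ x) :
    ∑ j, (⌈x j⌉₊ : ℝ) ≤ ∑ j, x j + Fintype.card ι := by
  calc ∑ j, (⌈x j⌉₊ : ℝ) ≤ ∑ j, (x j + 1) :=
        sum_le_sum fun j _ => (Nat.ceil_lt_add_one (hx j)).le
    _ = ∑ j, x j + Fintype.card ι := by simp [sum_add_distrib]

theorem natCeil_tsub_le {u x w : ℝ} {y : ℕ} (hu : 0 ≤ u) (hx : 0 ≤ x) (hw : 0 ≤ w)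
    (huxw : u ≤ x + w) (hxy : x ≤ y) : ((⌈u⌉₊ - y : ℕ) : ℝ) ≤ w + (x + 1 - ⌈x⌉₊) := by
  have hcx := Nat.ceil_lt_add_one hx
  rcases le_or_gt ⌈u⌉₊ y with h | h
  · rw [Nat.sub_eq_zero_of_le h, Nat.cast_zero]
    linarith
  · have hcu := Nat.ceil_lt_add_one hu
    have hcxy : (⌈x⌉₊ : ℝ) ≤ y := by exact_mod_cast Nat.ceil_le.2 hxy
    rw [Nat.cast_sub h.le]
    linarith

theorem div_sub_add_mul_le_div {α δ L t : ℝ} (hδ : 0 < δ) (ht : 0 < t) (htα : t ≤ α)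
    (hαL : α ≤ δ * L) : t / (δ * L - α + t) * L ≤ α / δ := by
  rw [div_mul_eq_mul_div, div_le_div_iff₀ (by linarith) hδ]
  nlinarith [mul_nonneg (sub_nonneg.2 htα) (sub_nonneg.2 hαL)]

theorem le_mul_of_mul_one_div_add_one_le {α δ L : ℝ} (hδ : 0 < δ)
    (h : α * (1 / δ + 1) ≤ (1 + δ) * L) : α ≤ δ * L := by
  rw [show α * (1 / δ + 1) = α / δ * (1 + δ) by field_simp, mul_comm (1 + δ)] at h
  rw [← div_le_iff₀' hδ]
  exact le_of_mul_le_mul_right h (by linarith)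

section Rounding

variable {κ ι : Type*} [Fintype ι] {A : Matrix κ ι ℝ} {b : κ → ℝ}

theorem exists_nat_feasible_of_lt_sum_natCeil (hA : ∀ i j, 0 ≤ A i j) {x z : ι → ℝ}
    {y : ι → ℕ} (hx0 : 0 ≤ x) (hx : b ≤ A *ᵥ x) (hz0 : 0 ≤ z) (hz : b ≤ A *ᵥ z)
    (hxy : ∀ j, x j ≤ y j) {δ α : ℝ} (hδ : 0 < δ) (hαδ : α ≤ δ * ∑ j, z j)
    (hxval : ∑ j, x j ≤ (1 + δ) * ∑ j, z j)
    (hceil : (1 + δ) * ∑ j, z j + Fintype.card ι - α < ∑ j, (⌈x j⌉₊ : ℝ)) :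
    ∃ ℓ : ι → ℕ, b ≤ A *ᵥ (fun j => (ℓ j : ℝ)) ∧
      ∑ j, (ℓ j : ℝ) ≤ (1 + δ) * ∑ j, z j + Fintype.card ι - α ∧
      ∑ j, ((ℓ j - y j : ℕ) : ℝ) ≤ α / δ + α := by
  set L := ∑ j, z j
  set S := ∑ j, x j
  set t := S - (1 + δ) * L + α
  have ht : 0 < t := by linarith [sum_natCeil_le hx0]
  set lam := t / (δ * L - α + t)
  have hlam0 : 0 ≤ lam := div_nonneg ht.le (by linarith)
  have hlam1 : lam ≤ 1 := div_le_one_of_le₀ (by linarith) (by linarith)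
  set u := (1 - lam) • x + lam • z with hu_def
  have hu0 : 0 ≤ u := add_nonneg (smul_nonneg (by linarith) hx0) (smul_nonneg hlam0 hz0)
  have hu : b ≤ A *ᵥ u := convex_setOf_le_mulVec A b hx hz (by linarith) hlam0 (by ring)
  have hsum_u : ∑ j, u j = (1 + δ) * L - α := by
    have hlamS : lam * (S - L) = t := by
      rw [show S - L = δ * L - α + t by ring]
      exact div_mul_cancel₀ t (by linarith)
    simp only [hu_def, Pi.add_apply, Pi.smul_apply, smul_eq_mul, sum_add_distrib, ← mul_sum]
    linear_combination -hlamS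
  have hux : ∀ j, u j ≤ x j + lam * z j := fun j => by
    simp only [hu_def, Pi.add_apply, Pi.smul_apply, smul_eq_mul]
    nlinarith [mul_nonneg hlam0 (hx0 j)]
  refine ⟨fun j => ⌈u j⌉₊, hu.trans (mulVec_le_mulVec_of_nonneg hA fun j => Nat.le_ceil _),
    by linarith [sum_natCeil_le hu0], ?_⟩
  calc ∑ j, ((⌈u j⌉₊ - y j : ℕ) : ℝ) ≤ ∑ j, (lam * z j + (x j + 1 - ⌈x j⌉₊)) :=
        sum_le_sum fun j _ => natCeil_tsub_le (hu0 j) (hx0 j)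
          (mul_nonneg hlam0 (hz0 j)) (hux j) (hxy j)
    _ = lam * L + (S + Fintype.card ι - ∑ j, (⌈x j⌉₊ : ℝ)) := by
        simp only [sum_add_distrib, sum_sub_distrib, ← mul_sum, sum_const, card_univ,
          nsmul_eq_mul, mul_one]
        ring
    _ ≤ α / δ + α := by
        linarith [div_sub_add_mul_le_div hδ ht (by linarith) hαδ]

theorem exists_nat_feasible_sum_le (hA : ∀ i j, 0 ≤ A i j) {x z : ι → ℝ} {y : ι → ℕ}
    (hx0 : 0 ≤ x) (hx : b ≤ A *ᵥ x) (hz0 : 0 ≤ z) (hz : b ≤ A *ᵥ z) (hxy : ∀ j, x j ≤ y j)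
    {δ α : ℝ} (hδ : 0 < δ) (hα : 0 ≤ α) (hαδ : α ≤ δ * ∑ j, z j)
    (hxval : ∑ j, x j ≤ (1 + δ) * ∑ j, z j) :
    ∃ ℓ : ι → ℕ, b ≤ A *ᵥ (fun j => (ℓ j : ℝ)) ∧
      ∑ j, (ℓ j : ℝ) ≤ (1 + δ) * ∑ j, z j + Fintype.card ι - α ∧
      ∑ j, ((ℓ j - y j : ℕ) : ℝ) ≤ α / δ + α := by
  by_cases hceil : ∑ j, (⌈x j⌉₊ : ℝ) ≤ (1 + δ) * ∑ j, z j + Fintype.card ι - α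
  · refine ⟨fun j => ⌈x j⌉₊, hx.trans (mulVec_le_mulVec_of_nonneg hA fun j => Nat.le_ceil _),
      hceil, ?_⟩
    have hexcess : ∀ j, ⌈x j⌉₊ - y j = 0 := fun j => Nat.sub_eq_zero_of_le (Nat.ceil_le.2 (hxy j))
    simp only [hexcess, Nat.cast_zero, sum_const_zero]
    positivity
  · exact exists_nat_feasible_of_lt_sum_natCeil hA hx0 hx hz0 hz hxy hδ hαδ hxval
      (not_le.1 hceil)

end Rounding

theorem algorithm3_correct_general
    (m n : ℕ)
    (A : Matrix (Fin m) (Fin n) ℝ) (hA : ∀ i j, 0 ≤ A i j)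
    (b : Fin m → ℝ)
    (xOPT : Fin n → ℝ)
    (hxOPTnonneg : ∀ j, 0 ≤ xOPT j)
    (hxOPTfeas : ∀ i, b i ≤ A.mulVec xOPT i)
    (LIN : ℝ) (hLIN : LIN = ∑ j, |xOPT j|)
    (δ : ℝ) (hδ : 0 < δ) (α : ℕ)
    (x' : Fin n → ℝ)
    (hx'nonneg : ∀ j, 0 ≤ x' j)
    (hx'feas : ∀ i, b i ≤ A.mulVec x' i)
    (hx'val : ∑ j, |x' j| ≤ (1 + δ) * LIN)
    (hx'big : (α : ℝ) * (1 / δ + 1) ≤ ∑ j, |x' j|)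
    (y' : Fin n → ℕ)
    (hy'val : ∑ j, (y' j : ℝ) ≤ (1 + δ) * LIN + n)
    (hy'ge : ∀ j, x' j ≤ (y' j : ℝ)) :
    ∃ y'' : Fin n → ℕ,
      (∀ i, b i ≤ A.mulVec (fun j => (y'' j : ℝ)) i) ∧
      ∑ j, (y'' j : ℝ) ≤ (1 + δ) * LIN + n - α ∧
      ∑ j ∈ Finset.univ.filter (fun j => y'' j < y' j), ((y' j : ℝ) - (y'' j : ℝ))
        ≤ (α : ℝ) * (1 / δ + 2) := by
  have hLIN_sum : LIN = ∑ j, xOPT j :=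
    hLIN.trans (sum_congr rfl fun j _ => abs_of_nonneg (hxOPTnonneg j))
  have hx'sum : ∑ j, |x' j| = ∑ j, x' j := sum_congr rfl fun j _ => abs_of_nonneg (hx'nonneg j)
  have hαδ : (α : ℝ) ≤ δ * LIN := le_mul_of_mul_one_div_add_one_le hδ (hx'big.trans hx'val)
  obtain ⟨ℓ, hℓ, hℓsum, hexcess⟩ := exists_nat_feasible_sum_le hA hx'nonneg hx'feas hxOPTnonneg
    hxOPTfeas hy'ge hδ α.cast_nonneg (hLIN_sum ▸ hαδ)
    (by rw [← hLIN_sum, ← hx'sum]; exact hx'val)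
  rw [← hLIN_sum, Fintype.card_fin] at hℓsum
  obtain ⟨y'', hℓy'', hsum, hdecrease⟩ :=
    exists_le_sum_le_of_sum_le_add (y := y') (a := α) hℓsum (by linarith)
  refine ⟨y'', hℓ.trans (mulVec_le_mulVec_of_nonneg hA fun j => Nat.cast_le.2 (hℓy'' j)),
    hsum, ?_⟩
  calc _ ≤ (α : ℝ) + (α / δ + α) := hdecrease.trans (by linarith)
    _ = α * (1 / δ + 2) := by ring

theorem algorithm3_correct
    (m n : ℕ) (hm : 0 < m) (hn : 0 < n)
    (A : Matrix (Fin m) (Fin n) ℝ) (hA : ∀ i j, 0 ≤ A i j)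
    (b : Fin m → ℝ) (hb : ∀ i, 0 ≤ b i)
    (xOPT : Fin n → ℝ)
    (hxOPTnonneg : ∀ j, 0 ≤ xOPT j)
    (hxOPTfeas : ∀ i, b i ≤ A.mulVec xOPT i)
    (hxOPTopt : ∀ x : Fin n → ℝ, (∀ j, 0 ≤ x j) → (∀ i, b i ≤ A.mulVec x i) →
      ∑ j, |xOPT j| ≤ ∑ j, |x j|)
    (LIN : ℝ) (hLIN : LIN = ∑ j, |xOPT j|) (hLINpos : 0 < LIN)
    (δ : ℝ) (hδ : 0 < δ) (α : ℕ) (hα : 0 < α)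
    (x' : Fin n → ℝ)
    (hx'nonneg : ∀ j, 0 ≤ x' j)
    (hx'feas : ∀ i, b i ≤ A.mulVec x' i)
    (hx'val : ∑ j, |x' j| ≤ (1 + δ) * LIN)
    (hx'big : (α : ℝ) * (1 / δ + 1) ≤ ∑ j, |x' j|)
    (y' : Fin n → ℕ)
    (hy'feas : ∀ i, b i ≤ A.mulVec (fun j => (y' j : ℝ)) i)
    (hy'val : ∑ j, (y' j : ℝ) ≤ (1 + δ) * LIN + n)
    (hy'ge : ∀ j, x' j ≤ (y' j : ℝ)) :
    ∃ y'' : Fin n → ℕ,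
      (∀ i, b i ≤ A.mulVec (fun j => (y'' j : ℝ)) i) ∧
      ∑ j, (y'' j : ℝ) ≤ (1 + δ) * LIN + n - α ∧
      ∑ j ∈ Finset.univ.filter (fun j => y'' j < y' j), ((y' j : ℝ) - (y'' j : ℝ))
        ≤ (α : ℝ) * (1 / δ + 2) :=
  algorithm3_correct_general m n A hA b xOPT hxOPTnonneg hxOPTfeas LIN hLIN δ hδ α x' hx'nonneg
    hx'feas hx'val hx'big y' hy'val hy'ge
end

section
/- Let ε ∈ (0, 1/2] and let I be a bin packing instance in which every item has size at least ε/2. Let R be a rounding function on I with maximal group index m' ≥ 1 satisfying: (B) all groups R^j with j ≥ 1 have the same cardinality; (C) |R^0| = d·|R^1| for some real d ≥ 1; and (D) whenever R(i) < R(i') we have s(i) ≥ s(i'). Then OPT(I^R) ≤ OPT(I), where I^R is the rounded instance. -/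
open Finset

/-- `Packs s N` : the items (with sizes `s`) can be packed into `N` bins of capacity 1. -/
def Packs {ι : Type} [Fintype ι] (s : ι → ℝ) (N : ℕ) : Prop :=
  ∃ B : ι → Fin N, ∀ j : Fin N, ∑ i ∈ Finset.univ.filter (fun i => B i = j), s i ≤ 1

/-- `IsBPOpt s N` : `N` is the least number of bins into which the items can be packed. -/
def IsBPOpt {ι : Type} [Fintype ι] (s : ι → ℝ) (N : ℕ) : Prop :=
  Packs s N ∧ ∀ N' : ℕ, Packs s N' → N ≤ N'

/-- The rounded size of item `i` under rounding `R` : the largest size in its group. -/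
noncomputable def roundedSize {ι : Type} [Fintype ι] (s : ι → ℝ) (R : ι → ℕ) (i : ι) : ℝ :=
  (Finset.univ.filter (fun i' => R i' = R i)).sup' ⟨i, by simp⟩ s

theorem rounded_opt_le_opt
    (ε : ℝ) (hε0 : 0 < ε) (hε : ε ≤ 1 / 2)
    (ι : Type) [Fintype ι] (s : ι → ℝ)
    (hspos : ∀ i, 0 < s i) (hsle : ∀ i, s i ≤ 1) (hsbig : ∀ i, ε / 2 ≤ s i)
    (m' : ℕ) (hm' : 1 ≤ m')
    (R : ι → ℕ) (hR : ∀ i, R i ≤ m')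
    -- (B) all groups R^j with j ≥ 1 have the same cardinality
    (hB : ∀ j k, 1 ≤ j → j ≤ m' → 1 ≤ k → k ≤ m' →
      (Finset.univ.filter (fun i => R i = j)).card =
        (Finset.univ.filter (fun i => R i = k)).card)
    -- (C) |R^0| = d·|R^1| for some d ≥ 1
    (d : ℝ) (hd : 1 ≤ d)
    (hC : ((Finset.univ.filter (fun i => R i = 0)).card : ℝ) =
      d * ((Finset.univ.filter (fun i => R i = 1)).card : ℝ))
    -- (D) groups with smaller index contain larger items
    (hD : ∀ i i', R i < R i' → s i' ≤ s i)
    (OPT OPTR : ℕ)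
    (hOPT : IsBPOpt s OPT)
    (hOPTR : IsBPOpt (fun i : {i : ι // 1 ≤ R i} => roundedSize s R i.1) OPTR) :
    OPTR ≤ OPT := by
  classical
  cases isEmpty_or_nonempty ι with
  | inl h =>
    have hE : IsEmpty {i : ι // 1 ≤ R i} := ⟨fun i => h.false i.1⟩
    refine hOPTR.2 OPT ⟨fun i => (hE.false i).elim, fun j => ?_⟩
    simp
  | inr hne =>
    -- card of group j ≤ card of group (j-1) for 1 ≤ j ≤ m'
    have hcard : ∀ j, 1 ≤ j → j ≤ m' →
        (Finset.univ.filter (fun i => R i = j)).card ≤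
          (Finset.univ.filter (fun i => R i = j - 1)).card := by
      intro j hj1 hjm
      rcases Nat.lt_or_ge j 2 with hj2 | hj2
      · interval_cases j
        simp only [Nat.sub_self]
        have h1 : (0:ℝ) ≤ ((Finset.univ.filter (fun i => R i = 1)).card : ℝ) := by positivity
        have : ((Finset.univ.filter (fun i => R i = 1)).card : ℝ) ≤
            ((Finset.univ.filter (fun i => R i = 0)).card : ℝ) := by
          rw [hC]; nlinarith
        exact_mod_cast this
      · exact le_of_eq (hB j (j-1) hj1 hjm (by omega) (by omega))
    -- per-group injections
    have hg : ∀ j, 1 ≤ j → j ≤ m' → ∃ g : ι → ι,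
        (↑(Finset.univ.filter (fun i => R i = j)) : Set ι) ⊆
          g ⁻¹' ↑(Finset.univ.filter (fun i => R i = j - 1)) ∧
        Set.InjOn g ↑(Finset.univ.filter (fun i => R i = j)) := by
      intro j hj1 hjm
      apply Set.Finite.exists_injOn_of_encard_le (Set.toFinite _)
      rw [Set.encard_coe_eq_coe_finsetCard, Set.encard_coe_eq_coe_finsetCard]
      exact_mod_cast hcard j hj1 hjm
    choose! g hg1 hg2 using hg
    -- global map
    set f : {i : ι // 1 ≤ R i} → ι := fun i => g (R i.1) i.1 with hf
    have hmem : ∀ i : {i : ι // 1 ≤ R i}, R (f i) = R i.1 - 1 := by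
      intro i
      have := hg1 (R i.1) i.2 (hR i.1)
        (Finset.mem_coe.2 (Finset.mem_filter.2 ⟨Finset.mem_univ _, rfl⟩))
      simpa using this
    have hfinj : Function.Injective f := by
      intro a b hab
      have hRa := hmem a
      have hRb := hmem b
      rw [hab] at hRa
      have hReq : R a.1 = R b.1 := by omega
      apply Subtype.ext
      have hab' : g (R a.1) a.1 = g (R b.1) b.1 := hab
      rw [← hReq] at hab'
      exact hg2 (R a.1) a.2 (hR a.1)
        (Finset.mem_coe.2 (Finset.mem_filter.2 ⟨Finset.mem_univ _, rfl⟩))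
        (Finset.mem_coe.2 (Finset.mem_filter.2 ⟨Finset.mem_univ _, hReq.symm⟩)) hab'
    -- size comparison
    have hsize : ∀ i : {i : ι // 1 ≤ R i}, roundedSize s R i.1 ≤ s (f i) := by
      intro i
      apply Finset.sup'_le
      intro b hb
      simp only [Finset.mem_filter] at hb
      apply hD
      rw [hmem i, hb.2]
      omega
    -- transport the packing
    obtain ⟨B, hB'⟩ := hOPT.1
    refine hOPTR.2 OPT ⟨fun i => B (f i), fun j => ?_⟩
    calc ∑ i ∈ Finset.univ.filter (fun i => B (f i) = j), roundedSize s R i.1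
        ≤ ∑ i ∈ Finset.univ.filter (fun i => B (f i) = j), s (f i) :=
          Finset.sum_le_sum (fun i _ => hsize i)
      _ = ∑ x ∈ (Finset.univ.filter (fun i => B (f i) = j)).image f, s x := by
          rw [Finset.sum_image (fun a _ b _ h => hfinj h)]
      _ ≤ ∑ x ∈ Finset.univ.filter (fun i => B i = j), s x := by
          apply Finset.sum_le_sum_of_subset_of_nonneg
          · intro x hx
            simp only [Finset.mem_image, Finset.mem_filter] at hx ⊢
            obtain ⟨a, ha, rfl⟩ := hx
            exact ⟨Finset.mem_univ _, ha.2⟩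
          · exact fun x _ _ => (hspos x).le
      _ ≤ 1 := hB' j
end

section
/- Let ε ∈ (0, 1/2] and let I be a bin packing instance in which every item has size at least ε/2. Let R be a rounding function on I with maximal group index m' satisfying: (A) m' = c/ε² for some real constant c > 0; (B) all groups R^j with j ≥ 1 have the same cardinality; (C) |R^0| = d·|R^1| for some real d ≥ 1; and (D) whenever R(i) < R(i') we have s(i) ≥ s(i'). Then |R^0| ≤ (2d/c)·ε·OPT(I). -/
open Finset

theorem group_zero_small
    (ε : ℝ) (hε0 : 0 < ε) (hε : ε ≤ 1 / 2)
    (ι : Type) [Fintype ι] (s : ι → ℝ)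
    (hspos : ∀ i, 0 < s i) (hsle : ∀ i, s i ≤ 1) (hsbig : ∀ i, ε / 2 ≤ s i)
    (m' : ℕ) (R : ι → ℕ) (hR : ∀ i, R i ≤ m')
    -- (A) m' = c/ε² for a constant c > 0
    (c : ℝ) (hc : 0 < c) (hA : (m' : ℝ) = c / ε ^ 2)
    -- (B) all groups R^j with j ≥ 1 have the same cardinality
    (hB : ∀ j k, 1 ≤ j → j ≤ m' → 1 ≤ k → k ≤ m' →
      (Finset.univ.filter (fun i => R i = j)).card =
        (Finset.univ.filter (fun i => R i = k)).card)
    -- (C) |R^0| = d·|R^1| for some d ≥ 1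
    (d : ℝ) (hd : 1 ≤ d)
    (hC : ((Finset.univ.filter (fun i => R i = 0)).card : ℝ) =
      d * ((Finset.univ.filter (fun i => R i = 1)).card : ℝ))
    -- (D) groups with smaller index contain larger items
    (hD : ∀ i i', R i < R i' → s i' ≤ s i)
    (OPT : ℕ) (hOPT : IsBPOpt s OPT) :
    ((Finset.univ.filter (fun i => R i = 0)).card : ℝ) ≤ 2 * d / c * ε * OPT := by
  -- m' ≥ 1
  have hm'pos : 0 < (m' : ℝ) := by rw [hA]; positivity
  -- total size bounded by OPT
  obtain ⟨B, hBpack⟩ := hOPT.1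
  have hsum_le : ∑ i, s i ≤ (OPT : ℝ) := by
    have h1 : ∑ i, s i = ∑ j : Fin OPT, ∑ i ∈ Finset.univ.filter (fun i => B i = j), s i := by
      rw [Finset.sum_fiberwise_of_maps_to (fun i _ => Finset.mem_univ (B i))]
    rw [h1]
    calc ∑ j : Fin OPT, ∑ i ∈ Finset.univ.filter (fun i => B i = j), s i
        ≤ ∑ _j : Fin OPT, (1 : ℝ) := Finset.sum_le_sum (fun j _ => hBpack j)
      _ = OPT := by simp
  -- card of universe bounded below by sizes
  have hcard_le : (ε / 2) * (Finset.univ : Finset ι).card ≤ (OPT : ℝ) := by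
    calc (ε / 2) * (Finset.univ : Finset ι).card
        = ∑ _i : ι, ε / 2 := by rw [Finset.sum_const, nsmul_eq_mul]; ring
      _ ≤ ∑ i, s i := Finset.sum_le_sum (fun i _ => hsbig i)
      _ ≤ OPT := hsum_le
  -- card univ ≥ m' * |R^1|
  have hfib : (Finset.univ : Finset ι).card
      = ∑ j ∈ Finset.range (m' + 1), (Finset.univ.filter (fun i => R i = j)).card :=
    Finset.card_eq_sum_card_fiberwise (fun i _ => Finset.mem_range.mpr (Nat.lt_succ_of_le (hR i)))
  have hm'1 : 1 ≤ m' := by exact_mod_cast hm'pos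
  have hIcc : m' * (Finset.univ.filter (fun i => R i = 1)).card
      = ∑ j ∈ Finset.Icc 1 m', (Finset.univ.filter (fun i => R i = j)).card := by
    rw [Finset.sum_congr rfl (fun j hj => hB j 1 (Finset.mem_Icc.mp hj).1
      (Finset.mem_Icc.mp hj).2 le_rfl hm'1)]
    rw [Finset.sum_const, Nat.card_Icc, smul_eq_mul]
    congr 1
  have hsubset : Finset.Icc 1 m' ⊆ Finset.range (m' + 1) := by
    intro j hj
    rw [Finset.mem_range]
    exact Nat.lt_succ_of_le (Finset.mem_Icc.mp hj).2
  have hcard_ge : m' * (Finset.univ.filter (fun i => R i = 1)).card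
      ≤ (Finset.univ : Finset ι).card := by
    rw [hfib, hIcc]
    exact Finset.sum_le_sum_of_subset hsubset
  have hcard_geR : (m' : ℝ) * ((Finset.univ.filter (fun i => R i = 1)).card : ℝ)
      ≤ ((Finset.univ : Finset ι).card : ℝ) := by exact_mod_cast hcard_ge
  -- finish with arithmetic
  rw [hC]
  have hε2 : (0 : ℝ) < ε ^ 2 := by positivity
  have hkey : c * ((Finset.univ.filter (fun i => R i = 1)).card : ℝ)
      ≤ 2 * ε * OPT := by
    have h1 : c / ε ^ 2 * ((Finset.univ.filter (fun i => R i = 1)).card : ℝ)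
        ≤ ((Finset.univ : Finset ι).card : ℝ) := by rw [← hA]; exact hcard_geR
    have h2 : c * ((Finset.univ.filter (fun i => R i = 1)).card : ℝ)
        ≤ ε ^ 2 * ((Finset.univ : Finset ι).card : ℝ) := by
      have := mul_le_mul_of_nonneg_left h1 (le_of_lt hε2)
      calc c * ((Finset.univ.filter (fun i => R i = 1)).card : ℝ)
          = ε ^ 2 * (c / ε ^ 2 * ((Finset.univ.filter (fun i => R i = 1)).card : ℝ)) := by
            field_simp
        _ ≤ ε ^ 2 * ((Finset.univ : Finset ι).card : ℝ) := this
    nlinarith [hcard_le, hε0]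
  have hd0 : (0 : ℝ) < d := lt_of_lt_of_le one_pos hd
  rw [div_mul_eq_mul_div, div_mul_eq_mul_div, le_div_iff₀ hc]
  nlinarith [mul_le_mul_of_nonneg_left hkey (le_of_lt hd0)]
end

section
/- Let ε ∈ (0, 1/2] and let I be a bin packing instance in which every item has size at least ε/2. Let R be a rounding function on I with maximal group index m' satisfying: (A) m' = c/ε² for some real constant c > 0 with m' ≥ 1; (B) all groups R^j with j ≥ 1 have the same cardinality; (C) |R^0| = d·|R^1| for some real d ≥ 1; and (D) whenever R(i) < R(i') we have s(i) ≥ s(i'). Let δ ≥ 0, C ≥ 0, and let N ∈ ℕ satisfy N ≤ (1+δ)·OPT(I^R) + C. Then N + |R^0| ≤ (1 + ε' + δ)·OPT(I) + C, where ε' = (2d/c)·ε. -/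
open Finset

/-! Since the groups never grow (the first step uses `d ≥ 1`), every item of a group `j ≥ 1`
can be matched injectively with an item of group `j - 1`, which by (D) is at least as large as
its rounded size. Hence an optimal packing of `I` induces a packing of `I^R`, and
`OPT(I^R) ≤ OPT(I)`. Moreover the `m'` equal groups `R^1, …, R^{m'}` lie in `I`, whose items
have size at least `ε / 2`, so `m' · |R^1| · ε / 2 ≤ OPT(I)`; with `m' = c / ε²` this gives
`|R^0| = d · |R^1| ≤ (2d / c) · ε · OPT(I)`. -/

open Function

section Packing

variable {ι κ : Type} [Fintype ι] [Fintype κ]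

theorem Packs.sum_le {s : ι → ℝ} {N : ℕ} (h : Packs s N) : ∑ i, s i ≤ N := by
  classical
  obtain ⟨B, hB⟩ := h
  calc ∑ i, s i = ∑ j : Fin N, ∑ i ∈ univ.filter (fun i => B i = j), s i :=
        (sum_fiberwise univ B s).symm
    _ ≤ ∑ _j : Fin N, (1 : ℝ) := sum_le_sum fun j _ => hB j
    _ = N := by simp

theorem Packs.card_mul_le {s : ι → ℝ} {N : ℕ} {a : ℝ} (h : Packs s N) (ha : ∀ i, a ≤ s i) :
    Fintype.card ι * a ≤ N :=
  calc Fintype.card ι * a = ∑ _i : ι, a := by simp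
    _ ≤ ∑ i, s i := sum_le_sum fun i _ => ha i
    _ ≤ N := h.sum_le

theorem Packs.of_injective {s : ι → ℝ} {t : κ → ℝ} {N : ℕ} (h : Packs s N)
    (hs : ∀ i, 0 ≤ s i) {F : κ → ι} (hF : Injective F) (hle : ∀ k, t k ≤ s (F k)) :
    Packs t N := by
  classical
  obtain ⟨B, hB⟩ := h
  refine ⟨B ∘ F, fun j => ?_⟩
  calc ∑ k ∈ univ.filter (fun k => B (F k) = j), t k
      ≤ ∑ k ∈ univ.filter (fun k => B (F k) = j), s (F k) := sum_le_sum fun k _ => hle k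
    _ = ∑ i ∈ (univ.filter (fun k => B (F k) = j)).map ⟨F, hF⟩, s i :=
        (sum_map _ ⟨F, hF⟩ s).symm
    _ ≤ ∑ i ∈ univ.filter (fun i => B i = j), s i := by
        refine sum_le_sum_of_subset_of_nonneg (fun i hi => ?_) fun i _ _ => hs i
        obtain ⟨k, hk, rfl⟩ := mem_map.1 hi
        simpa using hk
    _ ≤ 1 := hB j

end Packing

section Rounding

variable {ι : Type} [Fintype ι] {R : ι → ℕ}

theorem roundedSize_le_of_lt {s : ι → ℝ} (hD : ∀ i i', R i < R i' → s i' ≤ s i) {i i' : ι}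
    (h : R i' < R i) : roundedSize s R i ≤ s i' :=
  sup'_le _ _ fun b hb => hD i' b (by rwa [(mem_filter.1 hb).2])

theorem exists_injective_prev_group (hcard : ∀ j, #{i | R i = j + 1} ≤ #{i | R i = j}) :
    ∃ F : {i // 1 ≤ R i} → ι, Injective F ∧ ∀ i, R (F i) + 1 = R i := by
  have g j : {i // R i = j + 1} ↪ {i // R i = j} :=
    (Function.Embedding.nonempty_of_card_le (by simpa [Fintype.card_subtype] using hcard j)).some
  -- Routing through sigma types avoids casting along `R i - 1 + 1 = R i`.
  let toSigma : {i // 1 ≤ R i} → Σ j, {i // R i = j + 1} := fun i => ⟨R i - 1, i, by omega⟩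
  let ofSigma : (Σ j, {i // R i = j}) → ι := fun p => p.2
  have toSigma_inj : Injective toSigma := fun a b h =>
    Subtype.ext (congrArg (fun p : Σ j, {i // R i = j + 1} => (p.2 : ι)) h)
  have ofSigma_inj : Injective ofSigma := by
    rintro ⟨j, i, rfl⟩ ⟨k, i', rfl⟩ (rfl : i = i')
    rfl
  refine ⟨ofSigma ∘ Sigma.map id (fun j => g j) ∘ toSigma,
    ofSigma_inj.comp ((injective_id.sigma_map fun j => (g j).injective).comp toSigma_inj),
    fun i => ?_⟩
  have := (g (R i - 1) ⟨i, by omega⟩).2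
  have := i.2
  simp only [comp_apply, ofSigma, toSigma, Sigma.map]
  omega

theorem IsBPOpt.le_of_rounding {s : ι → ℝ} (hs : ∀ i, 0 ≤ s i)
    (hD : ∀ i i', R i < R i' → s i' ≤ s i) (hcard : ∀ j, #{i | R i = j + 1} ≤ #{i | R i = j})
    {M N : ℕ} (hM : IsBPOpt (fun i : {i // 1 ≤ R i} => roundedSize s R i.1) M)
    (hN : Packs s N) : M ≤ N :=
  have ⟨F, hF, hFR⟩ := exists_injective_prev_group hcard
  hM.2 N (hN.of_injective hs hF fun i => roundedSize_le_of_lt hD (by have := hFR i; omega))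

theorem card_filter_succ_le {m : ℕ} (hR : ∀ i, R i ≤ m)
    (hB : ∀ j k, 1 ≤ j → j ≤ m → 1 ≤ k → k ≤ m → #{i | R i = j} = #{i | R i = k})
    {d : ℝ} (hd : 1 ≤ d)
    (hC : (#{i | R i = 0} : ℝ) = d * #{i | R i = 1}) (j : ℕ) :
    #{i | R i = j + 1} ≤ #{i | R i = j} := by
  rcases Nat.eq_zero_or_pos j with rfl | hj
  · exact_mod_cast (le_mul_of_one_le_left (Nat.cast_nonneg _) hd).trans_eq hC.symm
  by_cases hjm : j + 1 ≤ m
  · exact (hB _ _ (by omega) hjm hj (by omega)).le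
  · have : #{i | R i = j + 1} = 0 := card_eq_zero.2 <| filter_eq_empty_iff.2 fun i _ => by
      have := hR i; omega
    simp [this]

theorem mul_card_filter_one_le {m : ℕ} (hR : ∀ i, R i ≤ m)
    (hB : ∀ j k, 1 ≤ j → j ≤ m → 1 ≤ k → k ≤ m → #{i | R i = j} = #{i | R i = k}) :
    m * #{i | R i = 1} ≤ Fintype.card ι := by
  calc m * #{i | R i = 1} = ∑ j ∈ Icc 1 m, #{i | R i = j} := by
        rw [sum_congr rfl fun j hj => by
          obtain ⟨h1, hjm⟩ := mem_Icc.1 hj; exact hB j 1 h1 hjm le_rfl (h1.trans hjm)]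
        simp
    _ ≤ ∑ j ∈ range (m + 1), #{i | R i = j} :=
        sum_le_sum_of_subset fun j hj => by simp only [mem_Icc, mem_range] at hj ⊢; omega
    _ = Fintype.card ι :=
        (card_eq_sum_card_fiberwise fun i _ => by simpa [Nat.lt_succ_iff] using hR i).symm

end Rounding

theorem rounded_solution_approximation_general
    (ε : ℝ) (hε0 : 0 < ε)
    (ι : Type) [Fintype ι] (s : ι → ℝ)
    (hspos : ∀ i, 0 < s i) (hsbig : ∀ i, ε / 2 ≤ s i)
    (m' : ℕ)
    (R : ι → ℕ) (hR : ∀ i, R i ≤ m')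
    -- (A) m' = c/ε² for a constant c > 0
    (c : ℝ) (hc : 0 < c) (hA : (m' : ℝ) = c / ε ^ 2)
    -- (B) all groups R^j with j ≥ 1 have the same cardinality
    (hB : ∀ j k, 1 ≤ j → j ≤ m' → 1 ≤ k → k ≤ m' →
      (Finset.univ.filter (fun i => R i = j)).card =
        (Finset.univ.filter (fun i => R i = k)).card)
    -- (C) |R^0| = d·|R^1| for some d ≥ 1
    (d : ℝ) (hd : 1 ≤ d)
    (hC : ((Finset.univ.filter (fun i => R i = 0)).card : ℝ) =
      d * ((Finset.univ.filter (fun i => R i = 1)).card : ℝ))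
    -- (D) groups with smaller index contain larger items
    (hD : ∀ i i', R i < R i' → s i' ≤ s i)
    (OPT OPTR : ℕ)
    (hOPT : IsBPOpt s OPT)
    (hOPTR : IsBPOpt (fun i : {i : ι // 1 ≤ R i} => roundedSize s R i.1) OPTR)
    (δ C : ℝ) (hδ : 0 ≤ δ)
    (N : ℕ) (hN : (N : ℝ) ≤ (1 + δ) * OPTR + C)
    (ε' : ℝ) (hε' : ε' = 2 * d / c * ε) :
    (N : ℝ) + ((Finset.univ.filter (fun i => R i = 0)).card : ℝ)
      ≤ (1 + ε' + δ) * OPT + C := by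
  have hOPTR_le : (OPTR : ℝ) ≤ OPT := by
    exact_mod_cast hOPTR.le_of_rounding (fun i => (hspos i).le) hD
      (card_filter_succ_le hR hB hd hC) hOPT.1
  have hcard : Fintype.card ι * (ε / 2) ≤ OPT := hOPT.1.card_mul_le hsbig
  have hm : (m' : ℝ) * #{i | R i = 1} ≤ Fintype.card ι := by
    exact_mod_cast mul_card_filter_one_le hR hB
  have hR1 : c * #{i | R i = 1} ≤ 2 * ε * OPT :=
    calc c * #{i | R i = 1} = 2 * ε * (m' * #{i | R i = 1} * (ε / 2)) := by
          rw [hA]; field_simp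
      _ ≤ 2 * ε * (Fintype.card ι * (ε / 2)) := by gcongr
      _ ≤ 2 * ε * OPT := by gcongr
  have hR0 : (#{i | R i = 0} : ℝ) ≤ ε' * OPT :=
    calc (#{i | R i = 0} : ℝ) = d / c * (c * #{i | R i = 1}) := by rw [hC]; field_simp
      _ ≤ d / c * (2 * ε * OPT) := by gcongr
      _ = ε' * OPT := by rw [hε']; ring
  linarith [mul_le_mul_of_nonneg_left hOPTR_le (by linarith : (0 : ℝ) ≤ 1 + δ)]

theorem rounded_solution_approximation
    (ε : ℝ) (hε0 : 0 < ε) (hε : ε ≤ 1 / 2)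
    (ι : Type) [Fintype ι] (s : ι → ℝ)
    (hspos : ∀ i, 0 < s i) (hsle : ∀ i, s i ≤ 1) (hsbig : ∀ i, ε / 2 ≤ s i)
    (m' : ℕ) (hm' : 1 ≤ m')
    (R : ι → ℕ) (hR : ∀ i, R i ≤ m')
    -- (A) m' = c/ε² for a constant c > 0
    (c : ℝ) (hc : 0 < c) (hA : (m' : ℝ) = c / ε ^ 2)
    -- (B) all groups R^j with j ≥ 1 have the same cardinality
    (hB : ∀ j k, 1 ≤ j → j ≤ m' → 1 ≤ k → k ≤ m' →
      (Finset.univ.filter (fun i => R i = j)).card =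
        (Finset.univ.filter (fun i => R i = k)).card)
    -- (C) |R^0| = d·|R^1| for some d ≥ 1
    (d : ℝ) (hd : 1 ≤ d)
    (hC : ((Finset.univ.filter (fun i => R i = 0)).card : ℝ) =
      d * ((Finset.univ.filter (fun i => R i = 1)).card : ℝ))
    -- (D) groups with smaller index contain larger items
    (hD : ∀ i i', R i < R i' → s i' ≤ s i)
    (OPT OPTR : ℕ)
    (hOPT : IsBPOpt s OPT)
    (hOPTR : IsBPOpt (fun i : {i : ι // 1 ≤ R i} => roundedSize s R i.1) OPTR)
    (δ C : ℝ) (hδ : 0 ≤ δ) (hCge : 0 ≤ C)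
    (N : ℕ) (hN : (N : ℝ) ≤ (1 + δ) * OPTR + C)
    (ε' : ℝ) (hε' : ε' = 2 * d / c * ε) :
    (N : ℝ) + ((Finset.univ.filter (fun i => R i = 0)).card : ℝ)
      ≤ (1 + ε' + δ) * OPT + C :=
  rounded_solution_approximation_general ε hε0 ι s hspos hsbig m' R hR c hc hA hB d hd hC hD OPT
    OPTR hOPT hOPTR δ C hδ N hN ε' hε'
end

section
/- Let A be an m×n real matrix with nonnegative entries and b ∈ ℝ^m nonnegative, and suppose the feasible region {x ∈ ℝ^n : Ax ≥ b, x ≥ 0} is nonempty. Then the minimum of ‖x‖₁ over the feasible region is attained, and moreover it is attained by a feasible solution having at most m nonzero components. -/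
/-!
Since `‖x‖∞ ≤ ‖x‖₁`, the ℓ¹ norm is coercive, so it attains its minimum on the closed
feasible set. If a nonnegative `x` has more than `m` nonzero coordinates, the corresponding
columns of `A` are linearly dependent: there is `d ≠ 0` supported in the support of `x` with
`A d = 0`, and after a sign change `∑ d ≤ 0` and some `d j < 0`. Walking from `x` along `d`
until the first coordinate vanishes (a ratio test) keeps `x ≥ 0` and `A x`, does not increase
`∑ x`, and shrinks the support. Iterating from a minimizer yields a minimizer with at most `m`
nonzero coordinates.
-/

open Finset Matrix Filter

section Sparsify

variable {𝕜 ι κ : Type*} [Field 𝕜] [Fintype ι] [Fintype κ]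

theorem Matrix.exists_ne_zero_mulVec_eq_zero_of_card_lt (A : Matrix κ ι 𝕜) {s : Finset ι}
    (hs : Fintype.card κ < #s) :
    ∃ d : ι → 𝕜, d ≠ 0 ∧ (∀ j ∉ s, d j = 0) ∧ A *ᵥ d = 0 := by
  classical
  have hdep : ¬LinearIndepOn 𝕜 Aᵀ (s : Set ι) := fun hli => by
    have := hli.linearIndependent.fintype_card_le_finrank
    simp only [coe_sort_coe, Fintype.card_coe, Module.finrank_fintype_fun_eq_card] at this
    omega
  obtain ⟨f, hf, j, hj, hfj⟩ := not_linearIndepOn_finset_iff.mp hdep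
  refine ⟨fun j => if j ∈ s then f j else 0, fun h => hfj ?_, fun j hj => if_neg hj, ?_⟩
  · simpa [hj] using congrFun h j
  · ext i
    simpa [mulVec, dotProduct, mul_comm] using congrFun hf i

variable [LinearOrder 𝕜] [IsStrictOrderedRing 𝕜]

theorem exists_nonneg_add_smul_support_ssubset {x d : ι → 𝕜} (hx : 0 ≤ x)
    (hd : ∀ j, x j = 0 → d j = 0) (hneg : ∃ j, d j < 0) :
    ∃ t : 𝕜, 0 ≤ t ∧ 0 ≤ x + t • d ∧
      univ.filter (fun j => (x + t • d) j ≠ 0) ⊂ univ.filter (fun j => x j ≠ 0) := by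
  set N := univ.filter (fun j => d j < 0)
  have hN : N.Nonempty := by simpa [N, filter_nonempty_iff] using hneg
  obtain ⟨j₁, hj₁N, ht⟩ := exists_mem_eq_inf' hN (fun j => x j / -d j)
  set t := N.inf' hN (fun j => x j / -d j)
  have hd₁ : d j₁ < 0 := (mem_filter.mp hj₁N).2
  have ht₀ : 0 ≤ t := by
    rw [ht]; exact div_nonneg (hx j₁) (neg_nonneg.mpr hd₁.le)
  have hsub : univ.filter (fun j => (x + t • d) j ≠ 0) ⊆ univ.filter (fun j => x j ≠ 0) := by
    intro j
    simp only [mem_filter, mem_univ, true_and]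
    exact fun hj hxj => hj (by simp [hxj, hd j hxj])
  refine ⟨t, ht₀, fun j => ?_, (ssubset_iff_of_subset hsub).mpr ⟨j₁, ?_, ?_⟩⟩
  · simp only [Pi.zero_apply, Pi.add_apply, Pi.smul_apply, smul_eq_mul]
    have hxj : 0 ≤ x j := hx j
    rcases lt_or_ge (d j) 0 with hdj | hdj
    · have : t ≤ x j / -d j := inf'_le _ (mem_filter.mpr ⟨mem_univ j, hdj⟩)
      rw [le_div_iff₀ (neg_pos.mpr hdj)] at this
      linarith
    · nlinarith [mul_nonneg ht₀ hdj]
  · simpa using fun hxj => hd₁.ne (hd j₁ hxj)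
  · simp only [mem_filter, mem_univ, true_and, not_not, Pi.add_apply, Pi.smul_apply,
      smul_eq_mul, ht]
    field_simp [hd₁.ne]
    ring

theorem Matrix.exists_nonneg_mulVec_eq_sum_le_support_ssubset (A : Matrix κ ι 𝕜) {x : ι → 𝕜}
    (hx : 0 ≤ x) (hcard : Fintype.card κ < #(univ.filter (fun j => x j ≠ 0))) :
    ∃ y : ι → 𝕜, 0 ≤ y ∧ A *ᵥ y = A *ᵥ x ∧ ∑ j, y j ≤ ∑ j, x j ∧
      univ.filter (fun j => y j ≠ 0) ⊂ univ.filter (fun j => x j ≠ 0) := by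
  obtain ⟨d, hd0, hdx, hAd⟩ := A.exists_ne_zero_mulVec_eq_zero_of_card_lt hcard
  replace hdx : ∀ j, x j = 0 → d j = 0 := fun j hxj => hdx j (by simpa using hxj)
  wlog hsum : ∑ j, d j ≤ 0 generalizing d
  · exact this (-d) (neg_ne_zero.mpr hd0) (by simp [mulVec_neg, hAd]) (by simpa using hdx)
      (by simp only [Pi.neg_apply, sum_neg_distrib]; linarith)
  have hneg : ∃ j, d j < 0 := by
    by_contra! hd
    exact hd0 (funext fun j => (sum_eq_zero_iff_of_nonneg fun j _ => hd j).mp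
      (hsum.antisymm (sum_nonneg fun j _ => hd j)) j (mem_univ j))
  obtain ⟨t, ht, hy, hsupp⟩ := exists_nonneg_add_smul_support_ssubset hx hdx hneg
  refine ⟨x + t • d, hy, by simp [mulVec_add, mulVec_smul, hAd], ?_, hsupp⟩
  simp only [Pi.add_apply, Pi.smul_apply, smul_eq_mul, sum_add_distrib, ← mul_sum]
  linarith [mul_nonpos_of_nonneg_of_nonpos ht hsum]

theorem Matrix.exists_nonneg_mulVec_eq_sum_le_card_support_le (A : Matrix κ ι 𝕜) {x : ι → 𝕜}
    (hx : 0 ≤ x) :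
    ∃ y : ι → 𝕜, 0 ≤ y ∧ A *ᵥ y = A *ᵥ x ∧ ∑ j, y j ≤ ∑ j, x j ∧
      #(univ.filter (fun j => y j ≠ 0)) ≤ Fintype.card κ := by
  induction hk : #(univ.filter (fun j => x j ≠ 0)) using Nat.strong_induction_on generalizing x
    with | _ k ih
  rcases le_or_gt k (Fintype.card κ) with hle | hlt
  · exact ⟨x, hx, rfl, le_rfl, hk ▸ hle⟩
  obtain ⟨y, hy, hAy, hsum, hsupp⟩ :=
    A.exists_nonneg_mulVec_eq_sum_le_support_ssubset hx (hk ▸ hlt)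
  obtain ⟨z, hz, hAz, hzsum, hzcard⟩ := ih _ (hk ▸ card_lt_card hsupp) hy rfl
  exact ⟨z, hz, hAz.trans hAy, hzsum.trans hsum, hzcard⟩

end Sparsify

theorem IsClosed.exists_isMinOn_sum_abs {ι : Type*} [Fintype ι] {s : Set (ι → ℝ)}
    (hs : IsClosed s) (hne : s.Nonempty) :
    ∃ x ∈ s, IsMinOn (fun x => ∑ j, |x j|) s x := by
  obtain ⟨x₀, hx₀⟩ := hne
  have hcont : Continuous fun x : ι → ℝ => ∑ j, |x j| := by fun_prop
  have hnorm (x : ι → ℝ) : ‖x‖ ≤ ∑ j, |x j| :=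
    (pi_norm_le_iff_of_nonneg (sum_nonneg fun j _ => abs_nonneg _)).mpr fun j =>
      single_le_sum (f := fun j => |x j|) (fun j _ => abs_nonneg _) (mem_univ j)
  refine hcont.continuousOn.exists_isMinOn' hs hx₀ (Eventually.filter_mono inf_le_left ?_)
  filter_upwards [tendsto_norm_cocompact_atTop.eventually_ge_atTop (∑ j, |x₀ j|)] with x hx
  exact hx.trans (hnorm x)

theorem Matrix.isClosed_setOf_nonneg_le_mulVec {ι κ : Type*} [Fintype ι] (A : Matrix κ ι ℝ)
    (b : κ → ℝ) :
    IsClosed {x | 0 ≤ x ∧ b ≤ A *ᵥ x} :=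
  isClosed_Ici.inter (isClosed_le continuous_const (continuous_const.matrix_mulVec continuous_id))

theorem lp_min_attained_basic_general
    (m n : ℕ)
    (A : Matrix (Fin m) (Fin n) ℝ)
    (b : Fin m → ℝ)
    (hfeas : ∃ x : Fin n → ℝ, (∀ j, 0 ≤ x j) ∧ ∀ i, b i ≤ A.mulVec x i) :
    ∃ x : Fin n → ℝ,
      (∀ j, 0 ≤ x j) ∧ (∀ i, b i ≤ A.mulVec x i) ∧
      (∀ y : Fin n → ℝ, (∀ j, 0 ≤ y j) → (∀ i, b i ≤ A.mulVec y i) →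
        ∑ j, |x j| ≤ ∑ j, |y j|) ∧
      (Finset.univ.filter (fun j => x j ≠ 0)).card ≤ m := by
  obtain ⟨z, ⟨hz, hAz⟩, hzmin⟩ :=
    (A.isClosed_setOf_nonneg_le_mulVec b).exists_isMinOn_sum_abs hfeas
  obtain ⟨x, hx, hAx, hsum, hcard⟩ := A.exists_nonneg_mulVec_eq_sum_le_card_support_le hz
  have sum_abs_eq {v : Fin n → ℝ} (hv : 0 ≤ v) : ∑ j, |v j| = ∑ j, v j :=
    sum_congr rfl fun j _ => abs_of_nonneg (hv j)
  refine ⟨x, hx, hAx ▸ hAz, fun y hy hAy => ?_, by simpa using hcard⟩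
  calc ∑ j, |x j| = ∑ j, x j := sum_abs_eq hx
    _ ≤ ∑ j, z j := hsum
    _ = ∑ j, |z j| := (sum_abs_eq hz).symm
    _ ≤ ∑ j, |y j| := hzmin ⟨hy, hAy⟩

theorem lp_min_attained_basic
    (m n : ℕ) (hm : 0 < m) (hn : 0 < n)
    (A : Matrix (Fin m) (Fin n) ℝ) (hA : ∀ i j, 0 ≤ A i j)
    (b : Fin m → ℝ) (hb : ∀ i, 0 ≤ b i)
    (hfeas : ∃ x : Fin n → ℝ, (∀ j, 0 ≤ x j) ∧ ∀ i, b i ≤ A.mulVec x i) :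
    ∃ x : Fin n → ℝ,
      (∀ j, 0 ≤ x j) ∧ (∀ i, b i ≤ A.mulVec x i) ∧
      (∀ y : Fin n → ℝ, (∀ j, 0 ≤ y j) → (∀ i, b i ≤ A.mulVec y i) →
        ∑ j, |x j| ≤ ∑ j, |y j|) ∧
      (Finset.univ.filter (fun j => x j ≠ 0)).card ≤ m :=
  lp_min_attained_basic_general m n A b hfeas
end
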